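/- arXiv:2312.04647 — 3 statements merged into one kernel-verified Lean document; each statement's English description precedes it below -/
import Mathlib

section
/- Distribution of the Poisson process with Bernšteĭn intertimes time-changed by an inverse subordinator (Theorem 2, representation part). Let λ > 0 with ψ(λ) > 0, k ∈ ℕ, t ≥ 0. Define p_k^ψ(s) = ((−λ)^k/k!) · (d/dλ)^k e^{−s·ψ(λ)} (k-th derivative in λ; these are the marginal distributions of the Poisson process with Bernšteĭn intertimes N(H^ψ)) and p_k^{ψ,f}(t) = ∫_0^∞ p_k^ψ(s) ℓ(t,s) ds. Then p_k^{ψ,f}(t) = ((−λ)^k/k!) · (d/dλ)^k [ ℓ̃(t, ψ(λ)) ], the k-th derivative at λ of the function x ↦ ℓ̃(t, ψ(x)). -/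
open MeasureTheory Set Filter Topology

/-- Measurability in a parameter of a pointwise derivative. -/
lemma measurable_param_deriv {F : ℝ → ℝ → ℝ} {G : ℝ → ℝ} {y : ℝ} (hy : 0 < y)
    (hF : ∀ z, 0 < z → Measurable (fun u => F u z))
    (hd : ∀ u : ℝ, HasDerivAt (F u) (G u) y) :
    Measurable G := by
  have hseq : Tendsto (fun n : ℕ => y + 1 / (n + 1)) atTop (𝓝[≠] y) := by
    apply tendsto_nhdsWithin_of_tendsto_nhds_of_eventually_within
    · simpa using (tendsto_const_nhds (x := y)).add (tendsto_one_div_add_atTop_nhds_zero_nat (𝕜 := ℝ))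
    · filter_upwards with n
      have : (0:ℝ) < 1 / (n + 1) := by positivity
      simp only [mem_compl_iff, mem_singleton_iff]
      intro h
      nlinarith [h]
  have hmeas : ∀ n : ℕ, Measurable (fun u => slope (F u) y (y + 1 / (n + 1))) := by
    intro n
    have h1 : (0:ℝ) < y + 1 / (n + 1) := by positivity
    unfold slope
    simp only [vsub_eq_sub, smul_eq_mul]
    exact (measurable_const.mul ((hF _ h1).sub (hF _ hy)))
  apply measurable_of_tendsto_metrizable hmeas
  rw [tendsto_pi_nhds]
  intro u
  exact ((hasDerivAt_iff_tendsto_slope.1 (hd u)).comp hseq)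

lemma integrable_of_le_min (μm : Measure ℝ)
    (hμm : ∫⁻ y in Ioi (0:ℝ), ENNReal.ofReal (min y 1) ∂μm < ⊤)
    {f : ℝ → ℝ} (hf : Measurable f) {K : ℝ} (hK : 0 ≤ K)
    (hbd : ∀ y > 0, |f y| ≤ K * min y 1) :
    Integrable f (μm.restrict (Ioi 0)) := by
  have hmin : Integrable (fun y => min y 1) (μm.restrict (Ioi 0)) := by
    refine ⟨(measurable_id.min measurable_const).aestronglyMeasurable, ?_⟩
    rw [hasFiniteIntegral_iff_ofReal ?_]
    · exact hμm
    · filter_upwards [ae_restrict_mem measurableSet_Ioi] with y hy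
      exact le_min (le_of_lt hy) one_pos.le
  refine (hmin.const_mul K).mono' hf.aestronglyMeasurable ?_
  rw [ae_restrict_iff' measurableSet_Ioi]
  filter_upwards with y hy
  simpa using hbd y hy

lemma pow_mul_exp_le_fact (j : ℕ) {θ u : ℝ} (hθ : 0 < θ) (hu : 0 ≤ u) :
    u ^ j * Real.exp (-(u * θ)) ≤ (j.factorial : ℝ) / θ ^ j := by
  have h1 : (u * θ) ^ j / (j.factorial : ℝ) ≤ Real.exp (u * θ) := by
    calc (u * θ) ^ j / (j.factorial : ℝ) ≤ ∑ i ∈ Finset.range (j + 1), (u * θ) ^ i / (i.factorial : ℝ) := by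
          refine Finset.single_le_sum (f := fun i => (u*θ)^i / (i.factorial : ℝ)) (fun i _ => by positivity)
            (Finset.self_mem_range_succ j)
      _ ≤ Real.exp (u * θ) := Real.sum_le_exp_of_nonneg (by positivity) _
  have h2 : u ^ j * θ ^ j / (j.factorial : ℝ) ≤ Real.exp (u * θ) := by
    rwa [mul_pow] at h1
  rw [Real.exp_neg]
  rw [div_le_iff₀ (by positivity)] at h2
  rw [le_div_iff₀ (by positivity)]
  calc u ^ j * (Real.exp (u * θ))⁻¹ * θ ^ j
      = (u ^ j * θ ^ j) * (Real.exp (u * θ))⁻¹ := by ring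
    _ ≤ (Real.exp (u * θ) * (j.factorial : ℝ)) * (Real.exp (u * θ))⁻¹ := by
        exact mul_le_mul_of_nonneg_right h2 (by positivity)
    _ = (j.factorial : ℝ) := by
        field_simp

lemma onePlus_pow_mul_exp_le (j : ℕ) {θ u : ℝ} (hθ : 0 < θ) (hu : 0 ≤ u) :
    (1 + u) ^ j * Real.exp (-(u * θ)) ≤ 2 ^ j * (1 + (j.factorial : ℝ) / θ ^ j) := by
  have h1 : (1 + u) ^ j ≤ 2 ^ j * (1 + u ^ j) := by
    calc (1 + u) ^ j ≤ (2 * max 1 u) ^ j := by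
          refine pow_le_pow_left₀ (by positivity) ?_ j
          rcases le_total u 1 with h | h
          · nlinarith [le_max_left 1 u]
          · nlinarith [le_max_right 1 u]
      _ = 2 ^ j * (max 1 u) ^ j := by rw [mul_pow]
      _ ≤ 2 ^ j * (1 + u ^ j) := by
          refine mul_le_mul_of_nonneg_left ?_ (by positivity)
          rcases le_total u 1 with h | h
          · rw [max_eq_left h]; simp; positivity
          · rw [max_eq_right h]
            nlinarith [pow_le_pow_left₀ hu (le_refl u) j]
  have he : (0:ℝ) < Real.exp (-(u * θ)) := Real.exp_pos _
  have he1 : Real.exp (-(u * θ)) ≤ 1 := by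
    rw [Real.exp_le_one_iff]; nlinarith
  calc (1 + u) ^ j * Real.exp (-(u * θ)) ≤ 2 ^ j * (1 + u ^ j) * Real.exp (-(u * θ)) := by
        exact mul_le_mul_of_nonneg_right h1 he.le
    _ = 2 ^ j * (Real.exp (-(u*θ)) + u ^ j * Real.exp (-(u * θ))) := by ring
    _ ≤ 2 ^ j * (1 + (j.factorial : ℝ) / θ ^ j) := by
        refine mul_le_mul_of_nonneg_left ?_ (by positivity)
        exact add_le_add he1 (pow_mul_exp_le_fact j hθ hu)

noncomputable def bfG (μm : Measure ℝ) (n : ℕ) (x : ℝ) : ℝ :=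
  ∫ y in Ioi (0:ℝ), y ^ n * Real.exp (-(x * y)) ∂μm

section G
variable {μm : Measure ℝ}
    (hμm : ∫⁻ y in Ioi (0:ℝ), ENNReal.ofReal (min y 1) ∂μm < ⊤)
include hμm

lemma bfG_integrand_integrable {n : ℕ} (hn : 1 ≤ n) {x1 x : ℝ} (hx1 : 0 < x1) (hx : x1 ≤ x) :
    Integrable (fun y => y ^ n * Real.exp (-(x * y))) (μm.restrict (Ioi 0)) := by
  have hx0 : 0 < x := hx1.trans_le hx
  refine integrable_of_le_min μm hμm ?_ (K := max 1 ((n.factorial : ℝ) / x1 ^ n))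
    (le_trans zero_le_one (le_max_left _ _)) ?_
  · exact (measurable_id.pow_const n).mul ((measurable_id.const_mul x).neg.exp)
  · intro y hy
    have hy0 : 0 < y := hy
    have habs : |y ^ n * Real.exp (-(x * y))| = y ^ n * Real.exp (-(x * y)) := by
      rw [abs_of_nonneg]; positivity
    rw [habs]
    rcases le_total y 1 with h | h
    · have h1 : y ^ n ≤ y := by
        calc y ^ n ≤ y ^ 1 := pow_le_pow_of_le_one hy0.le h hn
          _ = y := pow_one y
      have h2 : Real.exp (-(x * y)) ≤ 1 := by
        rw [Real.exp_le_one_iff]; nlinarith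
      calc y ^ n * Real.exp (-(x * y)) ≤ y * 1 := by
            exact mul_le_mul h1 h2 (Real.exp_pos _).le hy0.le
        _ = y := mul_one y
        _ = min y 1 := (min_eq_left h).symm
        _ ≤ max 1 ((n.factorial : ℝ) / x1 ^ n) * min y 1 := by
            nlinarith [min_le_left y 1, le_min hy0.le (zero_le_one), le_max_left (1:ℝ) ((n.factorial : ℝ) / x1 ^ n)]
    · have h1 : y ^ n * Real.exp (-(x * y)) ≤ (n.factorial : ℝ) / x1 ^ n := by
        have hkey := pow_mul_exp_le_fact n hx1 hy0.le
        have hmono : Real.exp (-(x * y)) ≤ Real.exp (-(y * x1)) := by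
          rw [Real.exp_le_exp]; nlinarith
        calc y ^ n * Real.exp (-(x * y)) ≤ y ^ n * Real.exp (-(y * x1)) := by
              exact mul_le_mul_of_nonneg_left hmono (by positivity)
          _ ≤ (n.factorial : ℝ) / x1 ^ n := hkey
      have hmin : min y 1 = 1 := min_eq_right h
      rw [hmin, mul_one]
      exact h1.trans (le_max_right _ _)


lemma one_sub_exp_integrable {x : ℝ} (hx : 0 < x) :
    Integrable (fun y => 1 - Real.exp (-(x * y))) (μm.restrict (Ioi 0)) := by
  refine integrable_of_le_min μm hμm ?_ (K := max x 1)
    (le_trans zero_le_one (le_max_right _ _)) ?_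
  · exact (measurable_const.sub ((measurable_id.const_mul x).neg.exp))
  · intro y hy
    have hy0 : 0 < y := hy
    have he1 : Real.exp (-(x * y)) ≤ 1 := by rw [Real.exp_le_one_iff]; nlinarith
    have he0 : (0:ℝ) < Real.exp (-(x * y)) := Real.exp_pos _
    have hle : 1 - Real.exp (-(x * y)) ≤ x * y := by
      nlinarith [Real.add_one_le_exp (-(x * y))]
    rw [abs_of_nonneg (by nlinarith)]
    rcases le_total y 1 with h | h
    · calc 1 - Real.exp (-(x * y)) ≤ x * y := hle
        _ ≤ max x 1 * min y 1 := by
            rw [min_eq_left h]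
            exact mul_le_mul_of_nonneg_right (le_max_left _ _) hy0.le
    · calc 1 - Real.exp (-(x * y)) ≤ 1 := by nlinarith
        _ ≤ max x 1 * min y 1 := by
            rw [min_eq_right h, mul_one]; exact le_max_right _ _

omit hμm in
lemma bfG_nonneg (n : ℕ) (x : ℝ) : 0 ≤ bfG μm n x := by
  refine setIntegral_nonneg measurableSet_Ioi fun y hy => ?_
  have : (0:ℝ) < y := hy
  positivity

lemma bfG_anti {n : ℕ} (hn : 1 ≤ n) {x x' : ℝ} (hx' : 0 < x') (hx : x' ≤ x) :
    bfG μm n x ≤ bfG μm n x' := by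
  refine setIntegral_mono_on (bfG_integrand_integrable hμm hn hx' hx)
    (bfG_integrand_integrable hμm hn hx' (le_refl x')) measurableSet_Ioi fun y hy => ?_
  have hy0 : (0:ℝ) < y := hy
  have : Real.exp (-(x * y)) ≤ Real.exp (-(x' * y)) := by
    rw [Real.exp_le_exp]; nlinarith
  exact mul_le_mul_of_nonneg_left this (by positivity)

lemma hasDerivAt_bfG {n : ℕ} (hn : 1 ≤ n) {x : ℝ} (hx : 0 < x) :
    HasDerivAt (bfG μm n) (-(bfG μm (n + 1) x)) x := by
  have hε : (0:ℝ) < x / 2 := by linarith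
  have key := hasDerivAt_integral_of_dominated_loc_of_deriv_le (μ := μm.restrict (Ioi 0))
    (F := fun x y => y ^ n * Real.exp (-(x * y)))
    (F' := fun x y => -(y ^ (n + 1) * Real.exp (-(x * y))))
    (x₀ := x) (s := Metric.ball x (x / 2)) (Metric.ball_mem_nhds x hε)
    (bound := fun y => max 1 (((n+1).factorial : ℝ) / (x / 2) ^ (n+1)) * min y 1)
    ?_ ?_ ?_ ?_ ?_ ?_
  · have h2 : (∫ y in Ioi (0:ℝ), -(y ^ (n+1) * Real.exp (-(x * y))) ∂μm)
        = -(bfG μm (n+1) x) := by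
      rw [integral_neg]; rfl
    rw [← h2]
    exact key.2
  · filter_upwards with z
    exact ((measurable_id.pow_const n).mul ((measurable_id.const_mul z).neg.exp)).aestronglyMeasurable
  · exact bfG_integrand_integrable hμm hn hx (le_refl x)
  · exact (((measurable_id.pow_const (n+1)).mul
      ((measurable_id.const_mul x).neg.exp)).neg).aestronglyMeasurable
  · rw [ae_restrict_iff' measurableSet_Ioi]
    filter_upwards with y hy
    intro z hz
    have hy0 : (0:ℝ) < y := hy
    have hz1 : x / 2 ≤ z := by
      have := abs_lt.1 (mem_ball_iff_norm.1 hz)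
      have := abs_lt.1 (by simpa [Real.norm_eq_abs] using mem_ball_iff_norm.1 hz)
      linarith [this.1]
    have habs : ‖-(y ^ (n+1) * Real.exp (-(z * y)))‖ = y ^ (n+1) * Real.exp (-(z * y)) := by
      rw [Real.norm_eq_abs, abs_neg, abs_of_nonneg (by positivity)]
    rw [habs]
    -- same bound as in bfG_integrand_integrable
    rcases le_total y 1 with h | h
    · have h1 : y ^ (n+1) ≤ y := by
        calc y ^ (n+1) ≤ y ^ 1 := pow_le_pow_of_le_one hy0.le h (by omega)
          _ = y := pow_one y
      have h2 : Real.exp (-(z * y)) ≤ 1 := by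
        rw [Real.exp_le_one_iff]; nlinarith
      calc y ^ (n+1) * Real.exp (-(z * y)) ≤ y * 1 :=
            mul_le_mul h1 h2 (Real.exp_pos _).le hy0.le
        _ = min y 1 := by rw [mul_one, min_eq_left h]
        _ ≤ _ := by
            nlinarith [le_min hy0.le zero_le_one,
              le_max_left (1:ℝ) (((n+1).factorial : ℝ) / (x / 2) ^ (n+1))]
    · have hkey := pow_mul_exp_le_fact (n+1) hε hy0.le
      have hmono : Real.exp (-(z * y)) ≤ Real.exp (-(y * (x / 2))) := by
        rw [Real.exp_le_exp]; nlinarith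
      calc y ^ (n+1) * Real.exp (-(z * y)) ≤ y ^ (n+1) * Real.exp (-(y * (x/2))) :=
            mul_le_mul_of_nonneg_left hmono (by positivity)
        _ ≤ ((n+1).factorial : ℝ) / (x/2) ^ (n+1) := hkey
        _ ≤ max 1 (((n+1).factorial : ℝ) / (x / 2) ^ (n+1)) * min y 1 := by
            rw [min_eq_right h, mul_one]; exact le_max_right _ _
  · refine (Integrable.const_mul ?_ _)
    refine ⟨(measurable_id.min measurable_const).aestronglyMeasurable, ?_⟩
    rw [hasFiniteIntegral_iff_ofReal ?_]
    · exact hμm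
    · filter_upwards [ae_restrict_mem measurableSet_Ioi] with y hy
      exact le_min (le_of_lt hy) one_pos.le
  · rw [ae_restrict_iff' measurableSet_Ioi]
    filter_upwards with y hy
    intro z hz
    have hder : HasDerivAt (fun w => y ^ n * Real.exp (-(w * y)))
        (-(y ^ (n+1) * Real.exp (-(z * y)))) z := by
      have h1 : HasDerivAt (fun w : ℝ => -(w * y)) (-y) z := by
        simpa using ((hasDerivAt_id z).mul_const y).fun_neg
      have h2 := h1.exp
      have h3 := h2.const_mul (y ^ n)
      refine h3.congr_deriv ?_
      ring
    exact hder

lemma hasDerivAt_G0 {x : ℝ} (hx : 0 < x) :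
    HasDerivAt (fun x => ∫ y in Ioi (0:ℝ), (1 - Real.exp (-(x * y))) ∂μm)
      (bfG μm 1 x) x := by
  have hε : (0:ℝ) < x / 2 := by linarith
  have key := hasDerivAt_integral_of_dominated_loc_of_deriv_le (μ := μm.restrict (Ioi 0))
    (F := fun x y => 1 - Real.exp (-(x * y)))
    (F' := fun z y => y ^ 1 * Real.exp (-(z * y)))
    (x₀ := x) (s := Metric.ball x (x / 2)) (Metric.ball_mem_nhds x hε)
    (bound := fun y => max 1 (((1).factorial : ℝ) / (x / 2) ^ 1) * min y 1)
    ?_ ?_ ?_ ?_ ?_ ?_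
  · exact key.2
  · filter_upwards with z
    exact (measurable_const.sub ((measurable_id.const_mul z).neg.exp)).aestronglyMeasurable
  · exact one_sub_exp_integrable hμm hx
  · exact ((measurable_id.pow_const 1).mul
      ((measurable_id.const_mul x).neg.exp)).aestronglyMeasurable
  · rw [ae_restrict_iff' measurableSet_Ioi]
    filter_upwards with y hy
    intro z hz
    have hy0 : (0:ℝ) < y := hy
    have hz1 : x / 2 ≤ z := by
      have := abs_lt.1 (by simpa [Real.norm_eq_abs] using mem_ball_iff_norm.1 hz)
      linarith [this.1]
    have habs : ‖y ^ 1 * Real.exp (-(z * y))‖ = y ^ 1 * Real.exp (-(z * y)) := by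
      rw [Real.norm_eq_abs, abs_of_nonneg (by positivity)]
    rw [habs]
    rcases le_total y 1 with h | h
    · have h2 : Real.exp (-(z * y)) ≤ 1 := by
        rw [Real.exp_le_one_iff]; nlinarith
      calc y ^ 1 * Real.exp (-(z * y)) ≤ y * 1 := by
            rw [pow_one]; exact mul_le_mul_of_nonneg_left h2 hy0.le
        _ = min y 1 := by rw [mul_one, min_eq_left h]
        _ ≤ _ := by
            nlinarith [le_min hy0.le zero_le_one,
              le_max_left (1:ℝ) (((1).factorial : ℝ) / (x / 2) ^ 1)]
    · have hkey := pow_mul_exp_le_fact 1 hε hy0.le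
      have hmono : Real.exp (-(z * y)) ≤ Real.exp (-(y * (x / 2))) := by
        rw [Real.exp_le_exp]; nlinarith
      calc y ^ 1 * Real.exp (-(z * y)) ≤ y ^ 1 * Real.exp (-(y * (x/2))) :=
            mul_le_mul_of_nonneg_left hmono (by positivity)
        _ ≤ ((1).factorial : ℝ) / (x/2) ^ 1 := hkey
        _ ≤ _ := by
            rw [min_eq_right h, mul_one]; exact le_max_right _ _
  · refine (Integrable.const_mul ?_ _)
    refine ⟨(measurable_id.min measurable_const).aestronglyMeasurable, ?_⟩
    rw [hasFiniteIntegral_iff_ofReal ?_]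
    · exact hμm
    · filter_upwards [ae_restrict_mem measurableSet_Ioi] with y hy
      exact le_min (le_of_lt hy) one_pos.le
  · rw [ae_restrict_iff' measurableSet_Ioi]
    filter_upwards with y hy
    intro z hz
    have h1 : HasDerivAt (fun w : ℝ => -(w * y)) (-y) z := by
      simpa using ((hasDerivAt_id z).mul_const y).fun_neg
    have h2 := (h1.exp).const_sub 1
    convert h2 using 1
    simp [Real.exp_ne_zero]
    ring

end G

noncomputable def bfPhi (μm : Measure ℝ) (d : ℝ) (ψ : ℝ → ℝ) : ℕ → ℝ → ℝ
  | 0 => ψ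
  | 1 => fun x => d + bfG μm 1 x
  | (n+2) => fun x => (-1:ℝ) ^ (n+1) * bfG μm (n+2) x

section Phi
variable {μm : Measure ℝ}
    (hμm : ∫⁻ y in Ioi (0:ℝ), ENNReal.ofReal (min y 1) ∂μm < ⊤)
    {c d : ℝ} {ψ : ℝ → ℝ}
    (hψ : ∀ x > 0, ψ x = c + d * x + ∫ y in Ioi (0:ℝ), (1 - Real.exp (-(x * y))) ∂μm)
include hμm hψ

lemma hasDerivAt_bfPhi (n : ℕ) {x : ℝ} (hx : 0 < x) :
    HasDerivAt (bfPhi μm d ψ n) (bfPhi μm d ψ (n+1) x) x := by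
  match n with
  | 0 =>
    have hform : HasDerivAt (fun x => c + d * x + ∫ y in Ioi (0:ℝ), (1 - Real.exp (-(x * y))) ∂μm)
        (0 + d * 1 + bfG μm 1 x) x := by
      exact (((hasDerivAt_const x c).add ((hasDerivAt_id x).const_mul d)).add
        (hasDerivAt_G0 hμm hx))
    have heq : (bfPhi μm d ψ 0) =ᶠ[𝓝 x] (fun x => c + d * x + ∫ y in Ioi (0:ℝ), (1 - Real.exp (-(x * y))) ∂μm) := by
      filter_upwards [isOpen_Ioi.mem_nhds (show x ∈ Ioi (0:ℝ) from hx)] with z hz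
      exact hψ z hz
    have := hform.congr_of_eventuallyEq heq
    refine this.congr_deriv ?_
    show _ = bfPhi μm d ψ 1 x
    simp [bfPhi]
  | 1 =>
    have := (hasDerivAt_bfG hμm (le_refl 1) hx).const_add d
    refine this.congr_deriv ?_
    show _ = bfPhi μm d ψ 2 x
    simp [bfPhi]
  | (m+2) =>
    have := (hasDerivAt_bfG hμm (show 1 ≤ m + 2 by omega) hx).const_mul ((-1:ℝ) ^ (m+1))
    refine this.congr_deriv ?_
    show _ = bfPhi μm d ψ (m+3) x
    show _ = (-1:ℝ) ^ (m+2) * bfG μm (m+3) x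
    rw [pow_succ]
    ring

lemma contDiffOn_bfPhi (n m : ℕ) : ContDiffOn ℝ n (bfPhi μm d ψ m) (Ioi 0) := by
  induction n generalizing m with
  | zero =>
    rw [show ((0:ℕ) : WithTop ℕ∞) = 0 by rfl, contDiffOn_zero]
    intro x hx
    exact ((hasDerivAt_bfPhi hμm hψ m hx).differentiableAt.continuousAt).continuousWithinAt
  | succ n IH =>
    rw [show (((n+1:ℕ)) : WithTop ℕ∞) = (n : WithTop ℕ∞) + 1 by push_cast; rfl,
      contDiffOn_succ_iff_derivWithin isOpen_Ioi.uniqueDiffOn]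
    refine ⟨fun x hx => ((hasDerivAt_bfPhi hμm hψ m hx).differentiableAt.differentiableWithinAt), ?_, ?_⟩
    · intro h; exact absurd h (by simp)
    · refine (IH (m+1)).congr fun x hx => ?_
      rw [derivWithin_of_isOpen isOpen_Ioi hx]
      exact (hasDerivAt_bfPhi hμm hψ m hx).deriv

lemma iteratedDerivWithin_bfPhi (m i : ℕ) {x : ℝ} (hx : x ∈ Ioi (0:ℝ)) :
    iteratedDerivWithin i (bfPhi μm d ψ m) (Ioi 0) x = bfPhi μm d ψ (m + i) x := by
  induction i generalizing x with
  | zero => simp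
  | succ i IH =>
    rw [iteratedDerivWithin_succ]
    have heq : Set.EqOn (iteratedDerivWithin i (bfPhi μm d ψ m) (Ioi 0))
        (bfPhi μm d ψ (m + i)) (Ioi 0) := fun z hz => IH hz
    rw [derivWithin_congr heq (IH hx), derivWithin_of_isOpen isOpen_Ioi hx,
      (hasDerivAt_bfPhi hμm hψ (m+i) hx).deriv]
    ring_nf

lemma psi_mono (hd : 0 ≤ d) {x' x : ℝ} (hx' : 0 < x') (hx : x' ≤ x) : ψ x' ≤ ψ x := by
  have hx0 : 0 < x := hx'.trans_le hx
  rw [hψ x' hx', hψ x hx0]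
  have h1 : d * x' ≤ d * x := mul_le_mul_of_nonneg_left hx hd
  have h2 : (∫ y in Ioi (0:ℝ), (1 - Real.exp (-(x' * y))) ∂μm)
      ≤ ∫ y in Ioi (0:ℝ), (1 - Real.exp (-(x * y))) ∂μm := by
    refine setIntegral_mono_on (one_sub_exp_integrable hμm hx')
      (one_sub_exp_integrable hμm hx0) measurableSet_Ioi fun y hy => ?_
    have hy0 : (0:ℝ) < y := hy
    have : Real.exp (-(x * y)) ≤ Real.exp (-(x' * y)) := by
      rw [Real.exp_le_exp]; nlinarith
    linarith
  linarith

lemma integral_one_sub_exp_nonneg {x : ℝ} (hx : 0 < x) :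
    0 ≤ ∫ y in Ioi (0:ℝ), (1 - Real.exp (-(x * y))) ∂μm := by
  refine setIntegral_nonneg measurableSet_Ioi fun y hy => ?_
  have hy0 : (0:ℝ) < y := hy
  have : Real.exp (-(x * y)) ≤ 1 := by rw [Real.exp_le_one_iff]; nlinarith
  linarith

lemma psi_pos_half (hc : 0 ≤ c) (hd : 0 ≤ d) {lam : ℝ} (hlam : 0 < lam) (hpos : 0 < ψ lam) :
    0 < ψ (lam / 2) := by
  have hl2 : 0 < lam / 2 := by linarith
  by_contra hcon
  push_neg at hcon
  have hI2 : 0 ≤ ∫ y in Ioi (0:ℝ), (1 - Real.exp (-((lam/2) * y))) ∂μm :=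
    integral_one_sub_exp_nonneg hμm hψ hl2
  rw [hψ _ hl2] at hcon
  have hc0 : c = 0 := by nlinarith
  have hd0 : d * (lam/2) = 0 := by nlinarith
  have hI0 : (∫ y in Ioi (0:ℝ), (1 - Real.exp (-((lam/2) * y))) ∂μm) = 0 := by nlinarith
  -- the integral at lam is at most twice the integral at lam/2
  have hIlam : (∫ y in Ioi (0:ℝ), (1 - Real.exp (-(lam * y))) ∂μm)
      ≤ ∫ y in Ioi (0:ℝ), 2 * (1 - Real.exp (-((lam/2) * y))) ∂μm := by
    refine setIntegral_mono_on (one_sub_exp_integrable hμm hlam)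
      ((one_sub_exp_integrable hμm hl2).const_mul 2) measurableSet_Ioi fun y hy => ?_
    have hy0 : (0:ℝ) < y := hy
    have hsplit : Real.exp (-(lam * y)) = Real.exp (-((lam/2) * y)) * Real.exp (-((lam/2) * y)) := by
      rw [← Real.exp_add]; ring_nf
    nlinarith [sq_nonneg (1 - Real.exp (-((lam/2) * y))), hsplit]
  rw [integral_const_mul, hI0, mul_zero] at hIlam
  have hpsilam := hψ lam hlam
  have hd0' : d * lam = 0 := by nlinarith
  have hInn := integral_one_sub_exp_nonneg hμm hψ hlam
  rw [hpsilam, hc0, hd0'] at hpos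
  linarith

lemma contDiffOn_exp_psi (u : ℝ) (n : ℕ) :
    ContDiffOn ℝ n (fun y => Real.exp (-(u * ψ y))) (Ioi 0) := by
  have h1 : ContDiffOn ℝ n (fun y => -(u * ψ y)) (Ioi 0) :=
    (contDiffOn_const.mul (contDiffOn_bfPhi hμm hψ n 0)).neg
  exact Real.contDiff_exp.comp_contDiffOn h1

lemma hasDerivAt_exp_psi (u : ℝ) {x : ℝ} (hx : 0 < x) :
    HasDerivAt (fun y => Real.exp (-(u * ψ y)))
      (-(u * bfPhi μm d ψ 1 x) * Real.exp (-(u * ψ x))) x := by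
  have h1 : HasDerivAt (fun y => -(u * ψ y)) (-(u * bfPhi μm d ψ 1 x)) x :=
    ((hasDerivAt_bfPhi hμm hψ 0 hx).const_mul u).neg
  have := h1.exp
  convert this using 1
  ring

lemma iDW_succ_exp_psi (j : ℕ) (u : ℝ) {x : ℝ} (hx : x ∈ Ioi (0:ℝ)) :
    iteratedDerivWithin (j+1) (fun y => Real.exp (-(u * ψ y))) (Ioi 0) x
      = iteratedDerivWithin j
          (fun y => -(u * bfPhi μm d ψ 1 y) * Real.exp (-(u * ψ y))) (Ioi 0) x := by
  rw [iteratedDerivWithin_succ']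
  refine iteratedDerivWithin_congr ?_ hx
  intro z hz
  rw [derivWithin_of_isOpen isOpen_Ioi hz]
  exact (hasDerivAt_exp_psi hμm hψ u hz).deriv

lemma hasDerivAt_iDW_exp_psi (j : ℕ) (u : ℝ) {x : ℝ} (hx : x ∈ Ioi (0:ℝ)) :
    HasDerivAt (iteratedDerivWithin j (fun y => Real.exp (-(u * ψ y))) (Ioi 0))
      (iteratedDerivWithin (j+1) (fun y => Real.exp (-(u * ψ y))) (Ioi 0) x) x := by
  have hdiff : DifferentiableOn ℝ
      (iteratedDerivWithin j (fun y => Real.exp (-(u * ψ y))) (Ioi 0)) (Ioi 0) :=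
    (contDiffOn_exp_psi hμm hψ u (j+1)).differentiableOn_iteratedDerivWithin
      (by exact_mod_cast Nat.lt_succ_self j) isOpen_Ioi.uniqueDiffOn
  have hda := (hdiff x hx).differentiableAt (isOpen_Ioi.mem_nhds hx)
  have hkey : iteratedDerivWithin (j+1) (fun y => Real.exp (-(u * ψ y))) (Ioi 0) x
      = deriv (iteratedDerivWithin j (fun y => Real.exp (-(u * ψ y))) (Ioi 0)) x := by
    rw [iteratedDerivWithin_succ,
      derivWithin_of_isOpen isOpen_Ioi hx]
  rw [hkey]
  exact hda.hasDerivAt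

lemma measurable_iDW_exp_psi (j : ℕ) {x : ℝ} (hx : x ∈ Ioi (0:ℝ)) :
    Measurable (fun u => iteratedDerivWithin j
      (fun y => Real.exp (-(u * ψ y))) (Ioi 0) x) := by
  induction j generalizing x with
  | zero =>
    simp only [iteratedDerivWithin_zero]
    exact Real.measurable_exp.comp ((measurable_id.mul_const (ψ x)).neg)
  | succ j IH =>
    have hx0 : (0:ℝ) < x := hx
    exact measurable_param_deriv hx0 (fun z hz => IH hz)
      (fun u => hasDerivAt_iDW_exp_psi hμm hψ j u hx)

lemma abs_bfPhi_le (hd : 0 ≤ d) {lam : ℝ} (hlam : 0 < lam) (j : ℕ) {x : ℝ}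
    (hx : lam / 2 ≤ x) :
    |bfPhi μm d ψ (j+1) x| ≤ d + bfG μm (j+1) (lam/2) := by
  have hl2 : (0:ℝ) < lam/2 := by linarith
  match j with
  | 0 =>
    show |d + bfG μm 1 x| ≤ _
    rw [abs_of_nonneg (add_nonneg hd (bfG_nonneg 1 x))]
    exact add_le_add le_rfl (bfG_anti hμm (le_refl 1) hl2 hx)
  | (m+1) =>
    show |(-1:ℝ) ^ (m+1) * bfG μm (m+2) x| ≤ _
    rw [abs_mul, abs_pow, abs_neg, abs_one, one_pow, one_mul,
      abs_of_nonneg (bfG_nonneg (m+2) x)]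
    calc bfG μm (m+2) x ≤ bfG μm (m+2) (lam/2) :=
          bfG_anti hμm (by omega) hl2 hx
      _ ≤ d + bfG μm (m+2) (lam/2) := le_add_of_nonneg_left hd

lemma abs_iDW_exp_psi_le (hd : 0 ≤ d) {lam : ℝ} (hlam : 0 < lam) (k0 : ℕ) :
    ∃ C : ℝ, 0 ≤ C ∧ ∀ j ≤ k0, ∀ u : ℝ, 0 ≤ u → ∀ x : ℝ, lam/2 ≤ x →
      |iteratedDerivWithin j (fun y => Real.exp (-(u * ψ y))) (Ioi 0) x|
        ≤ C * (1+u)^j * Real.exp (-(u * ψ (lam/2))) := by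
  have hl2 : (0:ℝ) < lam/2 := by linarith
  induction k0 with
  | zero =>
    refine ⟨1, zero_le_one, ?_⟩
    intro j hj u hu x hx
    interval_cases j
    simp only [iteratedDerivWithin_zero, pow_zero, one_mul, mul_one]
    rw [abs_of_nonneg (Real.exp_pos _).le]
    rw [Real.exp_le_exp]
    have := psi_mono hμm hψ hd hl2 hx
    nlinarith
  | succ k0 IH =>
    obtain ⟨C, hC0, hC⟩ := IH
    set S : ℝ := ∑ i ∈ Finset.range (k0+1),
      (k0.choose i : ℝ) * (d + bfG μm (i+1) (lam/2)) with hSdef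
    have hS0 : 0 ≤ S := by
      refine Finset.sum_nonneg fun i _ => ?_
      have := bfG_nonneg (μm := μm) (i+1) (lam/2)
      positivity
    refine ⟨max C (C * S), le_trans hC0 (le_max_left _ _), ?_⟩
    intro j hj u hu x hx
    have hx0 : x ∈ Ioi (0:ℝ) := lt_of_lt_of_le hl2 hx
    rcases Nat.lt_or_ge j (k0+1) with hjle | hjeq
    · refine (hC j (by omega) u hu x hx).trans ?_
      have h1 : C ≤ max C (C * S) := le_max_left _ _
      have h2 : (0:ℝ) ≤ (1+u)^j * Real.exp (-(u * ψ (lam/2))) := by positivity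
      nlinarith
    · have hj' : j = k0 + 1 := by omega
      subst hj'
      set E : ℝ := Real.exp (-(u * ψ (lam/2))) with hEdef
      have hE0 : 0 < E := Real.exp_pos _
      rw [iDW_succ_exp_psi hμm hψ k0 u hx0]
      have hnorm : |iteratedDerivWithin k0
          (fun y => -(u * bfPhi μm d ψ 1 y) * Real.exp (-(u * ψ y))) (Ioi 0) x|
          = ‖iteratedFDerivWithin ℝ k0
            (fun y => -(u * bfPhi μm d ψ 1 y) * Real.exp (-(u * ψ y))) (Ioi 0) x‖ := by
        rw [norm_iteratedFDerivWithin_eq_norm_iteratedDerivWithin, Real.norm_eq_abs]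
      rw [hnorm]
      have hmul := norm_iteratedFDerivWithin_mul_le (𝕜 := ℝ)
        (f := fun y => -(u * bfPhi μm d ψ 1 y))
        (g := fun y => Real.exp (-(u * ψ y))) (N := (k0 : WithTop ℕ∞))
        ((contDiffOn_const.mul (contDiffOn_bfPhi hμm hψ k0 1)).neg)
        (contDiffOn_exp_psi hμm hψ u k0)
        isOpen_Ioi.uniqueDiffOn hx0 (le_refl _)
      refine hmul.trans ?_
      have hterm : ∀ i ∈ Finset.range (k0+1),
          (k0.choose i : ℝ) * ‖iteratedFDerivWithin ℝ i (fun y => -(u * bfPhi μm d ψ 1 y)) (Ioi 0) x‖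
            * ‖iteratedFDerivWithin ℝ (k0-i) (fun y => Real.exp (-(u * ψ y))) (Ioi 0) x‖
          ≤ (k0.choose i : ℝ) * (u * (d + bfG μm (i+1) (lam/2))) * (C * (1+u)^k0 * E) := by
        intro i hi
        have ha : ‖iteratedFDerivWithin ℝ i (fun y => -(u * bfPhi μm d ψ 1 y)) (Ioi 0) x‖
            ≤ u * (d + bfG μm (i+1) (lam/2)) := by
          rw [norm_iteratedFDerivWithin_eq_norm_iteratedDerivWithin, Real.norm_eq_abs]
          have hfun : (fun y => -(u * bfPhi μm d ψ 1 y)) = (-u) • (bfPhi μm d ψ 1) := by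
            funext y; simp [neg_mul]
          rw [hfun, iteratedDerivWithin_const_smul_field (-u)
            (bfPhi μm d ψ 1), iteratedDerivWithin_bfPhi hμm hψ 1 i hx0]
          rw [smul_eq_mul, abs_mul, abs_neg, abs_of_nonneg hu]
          have : (1 + i) = i + 1 := by omega
          rw [this]
          exact mul_le_mul_of_nonneg_left (abs_bfPhi_le hμm hψ hd hlam i hx) hu
        have hb : ‖iteratedFDerivWithin ℝ (k0-i) (fun y => Real.exp (-(u * ψ y))) (Ioi 0) x‖
            ≤ C * (1+u)^k0 * E := by
          rw [norm_iteratedFDerivWithin_eq_norm_iteratedDerivWithin, Real.norm_eq_abs]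
          refine (hC (k0-i) (by omega) u hu x hx).trans ?_
          have hpow : (1+u)^(k0-i) ≤ (1+u)^k0 :=
            pow_le_pow_right₀ (by linarith) (Nat.sub_le k0 i)
          exact mul_le_mul_of_nonneg_right (mul_le_mul_of_nonneg_left hpow hC0)
            (Real.exp_pos _).le
        calc (k0.choose i : ℝ) * ‖iteratedFDerivWithin ℝ i (fun y => -(u * bfPhi μm d ψ 1 y)) (Ioi 0) x‖
              * ‖iteratedFDerivWithin ℝ (k0-i) (fun y => Real.exp (-(u * ψ y))) (Ioi 0) x‖
            ≤ (k0.choose i : ℝ) * (u * (d + bfG μm (i+1) (lam/2)))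
              * ‖iteratedFDerivWithin ℝ (k0-i) (fun y => Real.exp (-(u * ψ y))) (Ioi 0) x‖ := by
              refine mul_le_mul_of_nonneg_right (mul_le_mul_of_nonneg_left ha (by positivity)) (norm_nonneg _)
          _ ≤ (k0.choose i : ℝ) * (u * (d + bfG μm (i+1) (lam/2))) * (C * (1+u)^k0 * E) := by
              have h1 : (0:ℝ) ≤ (k0.choose i : ℝ) * (u * (d + bfG μm (i+1) (lam/2))) := by
                have := bfG_nonneg (μm := μm) (i+1) (lam/2)
                positivity
              exact mul_le_mul_of_nonneg_left hb h1
      refine (Finset.sum_le_sum hterm).trans ?_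
      have hsum : ∑ i ∈ Finset.range (k0+1),
          (k0.choose i : ℝ) * (u * (d + bfG μm (i+1) (lam/2))) * (C * (1+u)^k0 * E)
          = (u * (C * (1+u)^k0 * E)) * S := by
        rw [hSdef, Finset.mul_sum]
        refine Finset.sum_congr rfl fun i _ => by ring
      rw [hsum]
      have h1 : C * S ≤ max C (C * S) := le_max_right _ _
      have h2 : u * (1+u)^k0 ≤ (1+u)^(k0+1) := by
        rw [pow_succ]
        have hh := mul_le_mul_of_nonneg_right (show u ≤ 1+u by linarith)
          (show (0:ℝ) ≤ (1+u)^k0 by positivity)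
        nlinarith [hh]
      have h3 : (0:ℝ) ≤ (1+u)^k0 := by positivity
      have hkey : (C * S) * (u * (1+u)^k0) ≤ (max C (C * S)) * (1+u)^(k0+1) := by
        have hup : 0 ≤ u * (1+u)^k0 := by positivity
        have hCS : 0 ≤ C * S := mul_nonneg hC0 hS0
        exact mul_le_mul h1 h2 hup (le_trans hCS h1)
      calc (u * (C * (1+u)^k0 * E)) * S = ((C * S) * (u * (1+u)^k0)) * E := by ring
        _ ≤ ((max C (C * S)) * (1+u)^(k0+1)) * E :=
            mul_le_mul_of_nonneg_right hkey hE0.le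
        _ = max C (C * S) * (1+u)^(k0+1) * E := by ring

end Phi

/-- **Theorem 2 (representation part).** The marginal distributions of the
process `N(H^ψ(Y^f(t)))`:
`p_k^{ψ,f}(t) = ((−λ)^k/k!) ∂_λ^k [ℓ̃(t, ψ(λ))]`. -/
theorem bernstein_intertimes_representation
    -- ψ a Bernšteĭn function with drift d, killing c and Lévy measure μm
    (c d : ℝ) (hc : 0 ≤ c) (hd : 0 ≤ d)
    (μm : Measure ℝ)
    (hμm : ∫⁻ y in Ioi (0:ℝ), ENNReal.ofReal (min y 1) ∂μm < ⊤)
    (ψ : ℝ → ℝ)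
    (hψ : ∀ x > 0, ψ x = c + d * x + ∫ y in Ioi (0:ℝ), (1 - Real.exp (-(x * y))) ∂μm)
    -- the density ℓ of the inverse subordinator Y^f
    (ℓ : ℝ → ℝ → ℝ)
    (hℓmeas : Measurable (Function.uncurry ℓ))
    (hℓnonneg : ∀ t u, 0 ≤ ℓ t u)
    (hℓprob : ∀ t ≥ (0:ℝ), ∫ u in Ioi (0:ℝ), ℓ t u = 1)
    -- parameters and the marginals p_k^ψ of N(H^ψ)
    (lam : ℝ) (hlam : 0 < lam) (hψlam : 0 < ψ lam)
    (k : ℕ) (t : ℝ) (ht : 0 ≤ t)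
    (pψ : ℕ → ℝ → ℝ)
    (hpψ : ∀ j s, pψ j s = ((-lam) ^ j / (Nat.factorial j)) *
        iteratedDeriv j (fun x => Real.exp (-(s * ψ x))) lam) :
    ∫ s in Ioi (0:ℝ), pψ k s * ℓ t s
      = ((-lam) ^ k / (Nat.factorial k)) *
        iteratedDeriv k
          (fun x => ∫ u in Ioi (0:ℝ), Real.exp (-(ψ x * u)) * ℓ t u) lam := by
  have hl2 : (0:ℝ) < lam / 2 := by linarith
  have hlammem : lam ∈ Ioi (0:ℝ) := hlam
  have hθ : 0 < ψ (lam / 2) := psi_pos_half hμm hψ hc hd hlam hψlam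
  have hℓt_meas : Measurable (ℓ t) :=
    hℓmeas.comp (measurable_const.prodMk measurable_id)
  have hℓint : Integrable (ℓ t) (volume.restrict (Ioi 0)) := by
    by_contra h
    have h0 := integral_undef h
    rw [hℓprob t ht] at h0
    exact one_ne_zero h0
  obtain ⟨C, hC0, hC⟩ := abs_iDW_exp_psi_le hμm hψ hd hlam (k+1)
  set K : ℝ := 2^(k+1) * (1 + (((k+1).factorial : ℝ)) / (ψ (lam/2))^(k+1)) with hKdef
  have hK0 : 0 ≤ K := by positivity
  have hKb : ∀ j ≤ k+1, ∀ u : ℝ, 0 ≤ u →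
      (1+u)^j * Real.exp (-(u * ψ (lam/2))) ≤ K := by
    intro j hj u hu
    have h1 : (1+u)^j ≤ (1+u)^(k+1) := pow_le_pow_right₀ (by linarith) hj
    have h2 := onePlus_pow_mul_exp_le (k+1) hθ hu
    have h3 : (0:ℝ) < Real.exp (-(u * ψ (lam/2))) := Real.exp_pos _
    nlinarith
  -- uniform bound on the integrands
  have hDb : ∀ j ≤ k+1, ∀ u : ℝ, 0 < u → ∀ x : ℝ, lam/2 ≤ x →
      ‖iteratedDerivWithin j (fun y => Real.exp (-(u * ψ y))) (Ioi 0) x * ℓ t u‖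
        ≤ (C * K) * ℓ t u := by
    intro j hj u hu x hx
    rw [Real.norm_eq_abs, abs_mul, abs_of_nonneg (hℓnonneg t u)]
    refine mul_le_mul_of_nonneg_right ?_ (hℓnonneg t u)
    refine (hC j hj u hu.le x hx).trans ?_
    have := hKb j hj u hu.le
    nlinarith [Real.exp_pos (-(u * ψ (lam/2))), pow_nonneg (by linarith : (0:ℝ) ≤ 1+u) j]
  have hballhalf : ∀ z ∈ Metric.ball lam (lam/2), lam/2 ≤ z := by
    intro z hz
    have := abs_lt.1 (by simpa [Real.dist_eq] using hz)
    linarith [this.1]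
  have hballpos : ∀ z ∈ Metric.ball lam (lam/2), z ∈ Ioi (0:ℝ) := by
    intro z hz
    have := hballhalf z hz
    exact lt_of_lt_of_le hl2 this
  -- derivative of the parametric integral
  have hGd : ∀ j ≤ k, ∀ x ∈ Metric.ball lam (lam/2),
      HasDerivAt (fun z => ∫ u in Ioi (0:ℝ),
          iteratedDerivWithin j (fun y => Real.exp (-(u * ψ y))) (Ioi 0) z * ℓ t u)
        (∫ u in Ioi (0:ℝ),
          iteratedDerivWithin (j+1) (fun y => Real.exp (-(u * ψ y))) (Ioi 0) x * ℓ t u) x := by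
    intro j hj x hx
    have hε : (0:ℝ) < lam/2 - dist x lam := by
      have := Metric.mem_ball.1 hx
      linarith
    have hsub : Metric.ball x (lam/2 - dist x lam) ⊆ Metric.ball lam (lam/2) :=
      Metric.ball_subset_ball' (by linarith)
    have key := hasDerivAt_integral_of_dominated_loc_of_deriv_le
      (μ := volume.restrict (Ioi 0)) (x₀ := x) (s := Metric.ball x (lam/2 - dist x lam)) (Metric.ball_mem_nhds x hε)
      (F := fun z u => iteratedDerivWithin j (fun y => Real.exp (-(u * ψ y))) (Ioi 0) z * ℓ t u)
      (F' := fun z u => iteratedDerivWithin (j+1) (fun y => Real.exp (-(u * ψ y))) (Ioi 0) z * ℓ t u)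
      (bound := fun u => (C * K) * ℓ t u)
      ?_ ?_ ?_ ?_ ?_ ?_
    · exact key.2
    · filter_upwards [Metric.isOpen_ball.mem_nhds hx] with z hz
      exact ((measurable_iDW_exp_psi hμm hψ j (hballpos z hz)).mul hℓt_meas).aestronglyMeasurable
    · refine (hℓint.const_mul (C * K)).mono'
        ((measurable_iDW_exp_psi hμm hψ j (hballpos x hx)).mul hℓt_meas).aestronglyMeasurable ?_
      rw [ae_restrict_iff' measurableSet_Ioi]
      filter_upwards with u hu
      exact hDb j (by omega) u hu x (hballhalf x hx)
    · exact ((measurable_iDW_exp_psi hμm hψ (j+1) (hballpos x hx)).mul hℓt_meas).aestronglyMeasurable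
    · rw [ae_restrict_iff' measurableSet_Ioi]
      filter_upwards with u hu
      intro z hz
      exact hDb (j+1) (by omega) u hu z (hballhalf z (hsub hz))
    · exact hℓint.const_mul (C * K)
    · rw [ae_restrict_iff' measurableSet_Ioi]
      filter_upwards with u hu
      intro z hz
      exact (hasDerivAt_iDW_exp_psi hμm hψ j u (hballpos z (hsub hz))).mul_const (ℓ t u)
  -- identification of iterated derivatives of the parametric integral
  have hiter : ∀ j, j ≤ k → ∀ x ∈ Metric.ball lam (lam/2),
      iteratedDeriv j (fun z => ∫ u in Ioi (0:ℝ), Real.exp (-(u * ψ z)) * ℓ t u) x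
        = ∫ u in Ioi (0:ℝ),
            iteratedDerivWithin j (fun y => Real.exp (-(u * ψ y))) (Ioi 0) x * ℓ t u := by
    intro j
    induction j with
    | zero =>
      intro _ x hx
      simp [iteratedDerivWithin_zero]
    | succ j IH =>
      intro hj x hx
      rw [iteratedDeriv_succ]
      have heq : iteratedDeriv j (fun z => ∫ u in Ioi (0:ℝ), Real.exp (-(u * ψ z)) * ℓ t u)
          =ᶠ[nhds x] (fun z => ∫ u in Ioi (0:ℝ),
            iteratedDerivWithin j (fun y => Real.exp (-(u * ψ y))) (Ioi 0) z * ℓ t u) := by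
        filter_upwards [Metric.isOpen_ball.mem_nhds hx] with z hz
        exact IH (by omega) z hz
      rw [heq.deriv_eq]
      exact (hGd j (by omega) x hx).deriv
  -- identify within/global iterated derivatives at lam
  have hWD : ∀ f : ℝ → ℝ, iteratedDerivWithin k f (Ioi 0) lam = iteratedDeriv k f lam := by
    intro f
    rw [iteratedDerivWithin_eq_iteratedFDerivWithin, iteratedDeriv_eq_iteratedFDeriv,
      iteratedFDerivWithin_of_isOpen k isOpen_Ioi hlammem]
  -- rewrite the left-hand side
  have hL : (fun s => pψ k s * ℓ t s)
      = fun s => ((-lam) ^ k / (Nat.factorial k : ℝ)) *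
          (iteratedDerivWithin k (fun x => Real.exp (-(s * ψ x))) (Ioi 0) lam * ℓ t s) := by
    funext s
    rw [hpψ k s, hWD]
    ring
  rw [hL, integral_const_mul]
  -- rewrite the right-hand side function
  have hfun : (fun x => ∫ u in Ioi (0:ℝ), Real.exp (-(ψ x * u)) * ℓ t u)
      = fun z => ∫ u in Ioi (0:ℝ), Real.exp (-(u * ψ z)) * ℓ t u := by
    funext z
    congr 1
    funext u
    rw [mul_comm (ψ z) u]
  rw [hfun, hiter k (le_refl k) lam (Metric.mem_ball_self hl2)]
end

section
/- Distribution of the generalized counting process with double time change (Theorem 5, representation part). Let k ≥ 1, λ_1,…,λ_k > 0, Λ = Σ_{j=1}^k λ_j, n ∈ ℕ, t ≥ 0, and assume ψ(Λ) > 0. For s ≥ 0 define p̃_n^ψ(s) = Σ_{x∈Ω(k,n)} (Π_{j=1}^k λ_j^{x_j}/x_j!)·(−1)^{z(x)}·D_s^{(z(x))}(Λ), where D_s^{(z)}(Λ) is the z-th derivative at w = Λ of the function w ↦ e^{−s·ψ(w)} (these are the marginal distributions of the GCP with Bernšteĭn intertimes M(H^ψ)). Then ∫_0^∞ p̃_n^ψ(s)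 ℓ(t,s) ds = Σ_{x∈Ω(k,n)} (Π_{j=1}^k λ_j^{x_j}/x_j!)·(−1)^{z(x)}·E_t^{(z(x))}(Λ), where E_t^{(z)}(Λ) is the z-th derivative at w = Λ of the function w ↦ ℓ̃(t, ψ(w)). -/
open MeasureTheory Set Filter Topology
open scoped ContDiff Nat

lemma myPowExp {ε : ℝ} (hε : 0 < ε) {u : ℝ} (hu : 0 ≤ u) (i : ℕ) :
    u ^ i * Real.exp (-(ε * u)) ≤ (i ! : ℝ) / ε ^ i := by
  have h1 : (ε * u) ^ i / i ! ≤ Real.exp (ε * u) := Real.pow_div_factorial_le_exp (x := ε * u) (by positivity) i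
  have hfac : (0:ℝ) < (i ! : ℝ) := by positivity
  have h2 : (ε * u) ^ i ≤ Real.exp (ε * u) * (i ! : ℝ) := (div_le_iff₀ hfac).1 h1
  have key : u ^ i ≤ (i ! : ℝ) / ε ^ i * Real.exp (ε * u) := by
    rw [div_mul_eq_mul_div, le_div_iff₀ (pow_pos hε i)]
    calc u ^ i * ε ^ i = (ε * u) ^ i := by rw [mul_pow]; ring
    _ ≤ Real.exp (ε * u) * (i ! : ℝ) := h2
    _ = (i ! : ℝ) * Real.exp (ε * u) := mul_comm _ _
  rw [Real.exp_neg]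
  calc u ^ i * (Real.exp (ε * u))⁻¹ ≤ (i ! : ℝ) / ε ^ i * Real.exp (ε * u) * (Real.exp (ε * u))⁻¹ := by
        gcongr
  _ = (i ! : ℝ) / ε ^ i := by
        rw [mul_assoc, mul_inv_cancel₀ (Real.exp_ne_zero _), mul_one]

lemma myBoundPow {x : ℝ} (hx : 0 < x) {m : ℕ} (hm : 1 ≤ m) {y : ℝ} (hy : y ∈ Ioi (0:ℝ))
    {w : ℝ} (hw : x ≤ w) :
    |y ^ m * Real.exp (-(w * y))| ≤ max 1 ((m ! : ℝ) / x ^ m) * min y 1 := by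
  have hy0 : (0:ℝ) < y := hy
  have hexp : Real.exp (-(w * y)) ≤ Real.exp (-(x * y)) := by
    apply Real.exp_le_exp.2; nlinarith
  rw [abs_of_nonneg (by positivity)]
  rcases le_total y 1 with hy1 | hy1
  · have h1 : y ^ m * Real.exp (-(w * y)) ≤ y := by
      calc y ^ m * Real.exp (-(w * y)) ≤ y ^ m * 1 := by
            gcongr
            exact Real.exp_le_one_iff.2 (by nlinarith)
      _ = y ^ m := mul_one _
      _ ≤ y ^ 1 := pow_le_pow_of_le_one hy0.le hy1 hm
      _ = y := pow_one y
    calc y ^ m * Real.exp (-(w * y)) ≤ y := h1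
    _ = min y 1 := (min_eq_left hy1).symm
    _ ≤ max 1 ((m ! : ℝ) / x ^ m) * min y 1 :=
        le_mul_of_one_le_left (le_min hy0.le zero_le_one) (le_max_left _ _)
  · have hmin : min y 1 = 1 := min_eq_right hy1
    rw [hmin, mul_one]
    calc y ^ m * Real.exp (-(w * y)) ≤ y ^ m * Real.exp (-(x * y)) := by gcongr
    _ ≤ (m ! : ℝ) / x ^ m := myPowExp hx hy0.le m
    _ ≤ max 1 ((m ! : ℝ) / x ^ m) := le_max_right _ _

lemma myBoundOneSub {x : ℝ} (hx : 0 < x) {y : ℝ} (hy : y ∈ Ioi (0:ℝ)) :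
    |1 - Real.exp (-(x * y))| ≤ max x 1 * min y 1 := by
  have hy0 : (0:ℝ) < y := hy
  have h0 : 0 ≤ 1 - Real.exp (-(x * y)) := by
    have : Real.exp (-(x * y)) ≤ 1 := Real.exp_le_one_iff.2 (by nlinarith)
    linarith
  rw [abs_of_nonneg h0]
  have h1 : 1 - Real.exp (-(x * y)) ≤ min (x * y) 1 := by
    refine le_min ?_ ?_
    · have := Real.add_one_le_exp (-(x * y)); linarith
    · have := Real.exp_pos (-(x * y)); linarith
  refine h1.trans ?_
  rcases le_total y 1 with hy1 | hy1
  · calc min (x * y) 1 ≤ x * y := min_le_left _ _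
    _ ≤ max x 1 * y := by gcongr; exact le_max_left _ _
    _ = max x 1 * min y 1 := by rw [min_eq_left hy1]
  · calc min (x * y) 1 ≤ 1 := min_le_right _ _
    _ ≤ max x 1 := le_max_right _ _
    _ = max x 1 * min y 1 := by rw [min_eq_right hy1, mul_one]

variable {μm : Measure ℝ}

lemma myIntMin (hμm : ∫⁻ y in Ioi (0:ℝ), ENNReal.ofReal (min y 1) ∂μm < ⊤) :
    Integrable (fun y => min y 1) (μm.restrict (Ioi 0)) := by
  refine ⟨(continuous_id.min continuous_const).aestronglyMeasurable, ?_⟩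
  refine lt_of_le_of_lt (le_of_eq ?_) hμm
  refine lintegral_congr_ae ?_
  filter_upwards [ae_restrict_mem measurableSet_Ioi] with y hy
  have h0 : (0:ℝ) ≤ min y 1 := le_min (le_of_lt hy) zero_le_one
  simp [Real.enorm_eq_ofReal h0]

lemma myIntDom (hμm : ∫⁻ y in Ioi (0:ℝ), ENNReal.ofReal (min y 1) ∂μm < ⊤)
    {C : ℝ} {f : ℝ → ℝ} (hf : AEStronglyMeasurable f (μm.restrict (Ioi 0)))
    (h : ∀ y ∈ Ioi (0:ℝ), |f y| ≤ C * min y 1) : Integrable f (μm.restrict (Ioi 0)) := by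
  refine ((myIntMin hμm).const_mul C).mono' hf ?_
  filter_upwards [ae_restrict_mem measurableSet_Ioi] with y hy
  simpa [Real.norm_eq_abs] using h y hy

noncomputable def Bphi (μm : Measure ℝ) (m : ℕ) (x : ℝ) : ℝ :=
  ∫ y in Ioi (0:ℝ), y ^ m * Real.exp (-(x * y)) ∂μm

lemma myIntPow (hμm : ∫⁻ y in Ioi (0:ℝ), ENNReal.ofReal (min y 1) ∂μm < ⊤)
    {m : ℕ} (hm : 1 ≤ m) {x w : ℝ} (hx : 0 < x) (hw : x ≤ w) :
    Integrable (fun y => y ^ m * Real.exp (-(w * y))) (μm.restrict (Ioi 0)) := by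
  refine myIntDom hμm ?_ (fun y hy => myBoundPow hx hm hy hw)
  exact (Continuous.aestronglyMeasurable (by continuity))

lemma myHasDerivAtExp (y : ℝ) {w : ℝ} :
    HasDerivAt (fun w => Real.exp (-(w * y))) (-y * Real.exp (-(w * y))) w := by
  have h : HasDerivAt (fun w : ℝ => -(w * y)) (-y) w := by
    exact (hasDerivAt_mul_const y).neg
  simpa [mul_comm] using h.exp

lemma myHasDerivAtBphi (hμm : ∫⁻ y in Ioi (0:ℝ), ENNReal.ofReal (min y 1) ∂μm < ⊤)
    {m : ℕ} (hm : 1 ≤ m) {x : ℝ} (hx : 0 < x) :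
    HasDerivAt (Bphi μm m) (-Bphi μm (m + 1) x) x := by
  have hball : ∀ w ∈ Metric.ball x (x / 2), x / 2 ≤ w := by
    intro w hw
    rw [Metric.mem_ball, Real.dist_eq, abs_lt] at hw
    linarith [hw.1]
  have key := hasDerivAt_integral_of_dominated_loc_of_deriv_le (μ := μm.restrict (Ioi 0))
      (F := fun w y => y ^ m * Real.exp (-(w * y)))
      (F' := fun w y => -(y ^ (m + 1) * Real.exp (-(w * y))))
      (x₀ := x) (s := Metric.ball x (x / 2)) (bound := fun y => max 1 (((m+1)! : ℝ) / (x / 2) ^ (m+1)) * min y 1)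
      (Metric.ball_mem_nhds _ (by positivity))
      (Eventually.of_forall fun w => (Continuous.aestronglyMeasurable (by continuity)))
      (myIntPow hμm hm hx le_rfl)
      ((Continuous.aestronglyMeasurable (by continuity)))
      ?_ (((myIntMin hμm).const_mul _)) ?_
  · have h2 := key.2
    have : (∫ y in Ioi (0:ℝ), -(y ^ (m+1) * Real.exp (-(x * y))) ∂μm) = -Bphi μm (m+1) x := by
      rw [integral_neg]; rfl
    rw [this] at h2
    exact h2
  · filter_upwards [ae_restrict_mem measurableSet_Ioi] with y hy
    intro w hw
    have := myBoundPow (half_pos hx) (Nat.le_add_left 1 m) hy (hball w hw)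
    rw [Real.norm_eq_abs, abs_neg]; exact this
  · refine Eventually.of_forall fun y => fun w _ => ?_
    have h := (myHasDerivAtExp y (w := w)).const_mul (y ^ m)
    exact h.congr_deriv (by ring)

lemma myHasDerivAtJ (hμm : ∫⁻ y in Ioi (0:ℝ), ENNReal.ofReal (min y 1) ∂μm < ⊤)
    {x : ℝ} (hx : 0 < x) :
    HasDerivAt (fun x => ∫ y in Ioi (0:ℝ), (1 - Real.exp (-(x * y))) ∂μm) (Bphi μm 1 x) x := by
  have hball : ∀ w ∈ Metric.ball x (x / 2), x / 2 ≤ w := by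
    intro w hw
    rw [Metric.mem_ball, Real.dist_eq, abs_lt] at hw
    linarith [hw.1]
  have key := hasDerivAt_integral_of_dominated_loc_of_deriv_le (μ := μm.restrict (Ioi 0))
      (F := fun w y => 1 - Real.exp (-(w * y)))
      (F' := fun w y => y ^ 1 * Real.exp (-(w * y)))
      (x₀ := x) (s := Metric.ball x (x / 2)) (bound := fun y => max 1 ((1 ! : ℝ) / (x / 2) ^ 1) * min y 1)
      (Metric.ball_mem_nhds _ (by positivity))
      (Eventually.of_forall fun w => (Continuous.aestronglyMeasurable (by continuity)))
      (myIntDom hμm (Continuous.aestronglyMeasurable (by continuity))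
        (fun y hy => myBoundOneSub hx hy))
      ((Continuous.aestronglyMeasurable (by continuity)))
      ?_ (((myIntMin hμm).const_mul _)) ?_
  · exact key.2
  · filter_upwards [ae_restrict_mem measurableSet_Ioi] with y hy
    intro w hw
    have := myBoundPow (half_pos hx) le_rfl hy (hball w hw)
    rw [Real.norm_eq_abs]; exact this
  · refine Eventually.of_forall fun y => fun w _ => ?_
    have h := (hasDerivAt_const w (1:ℝ)).sub (myHasDerivAtExp y (w := w))
    exact h.congr_deriv (by ring)

lemma myContDiffOnBphi (hμm : ∫⁻ y in Ioi (0:ℝ), ENNReal.ofReal (min y 1) ∂μm < ⊤) :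
    ∀ (N : ℕ) {m : ℕ}, 1 ≤ m → ContDiffOn ℝ N (Bphi μm m) (Ioi 0) := by
  intro N
  induction N with
  | zero =>
    intro m hm
    rw [Nat.cast_zero, contDiffOn_zero]
    exact fun x hx => ((myHasDerivAtBphi hμm hm hx).continuousAt).continuousWithinAt
  | succ N IH =>
    intro m hm
    rw [show ((N + 1 : ℕ) : WithTop ℕ∞) = (N : WithTop ℕ∞) + 1 by push_cast; rfl,
      contDiffOn_succ_iff_deriv_of_isOpen isOpen_Ioi]
    refine ⟨fun x hx => (myHasDerivAtBphi hμm hm hx).differentiableAt.differentiableWithinAt,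
      ?_, ?_⟩
    · intro h
      simp at h
    · refine ((IH (m := m + 1) (by omega)).neg).congr fun x hx => ?_
      exact (myHasDerivAtBphi hμm hm hx).deriv

lemma myContDiffOnJ (hμm : ∫⁻ y in Ioi (0:ℝ), ENNReal.ofReal (min y 1) ∂μm < ⊤) :
    ContDiffOn ℝ ∞ (fun x => ∫ y in Ioi (0:ℝ), (1 - Real.exp (-(x * y))) ∂μm) (Ioi 0) := by
  rw [contDiffOn_infty]
  intro N
  cases N with
  | zero =>
    rw [Nat.cast_zero, contDiffOn_zero]
    exact fun x hx => ((myHasDerivAtJ hμm hx).continuousAt).continuousWithinAt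
  | succ N =>
    rw [show ((N + 1 : ℕ) : WithTop ℕ∞) = (N : WithTop ℕ∞) + 1 by push_cast; rfl,
      contDiffOn_succ_iff_deriv_of_isOpen isOpen_Ioi]
    refine ⟨fun x hx => (myHasDerivAtJ hμm hx).differentiableAt.differentiableWithinAt, ?_, ?_⟩
    · intro h
      simp at h
    · refine (myContDiffOnBphi hμm N le_rfl).congr fun x hx => ?_
      exact (myHasDerivAtJ hμm hx).deriv

lemma myIDWOpen {f : ℝ → ℝ} {s : Set ℝ} (hs : IsOpen s) {x : ℝ} (hx : x ∈ s) (m : ℕ) :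
    iteratedDerivWithin m f s x = iteratedDeriv m f x := by
  rw [iteratedDerivWithin_eq_iteratedFDerivWithin, iteratedDeriv_eq_iteratedFDeriv,
    iteratedFDerivWithin_of_isOpen m hs hx]

lemma myIDexp (u : ℝ) : ∀ i : ℕ,
    iteratedDeriv i (fun v => Real.exp (-(v * u))) = fun v => (-u) ^ i * Real.exp (-(v * u))
  | 0 => by funext v; simp
  | (i + 1) => by
    rw [iteratedDeriv_succ, myIDexp u i]
    funext v
    have h0 : HasDerivAt (fun v : ℝ => Real.exp (-(v * u))) (-u * Real.exp (-(v * u))) v := by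
      have h : HasDerivAt (fun v : ℝ => -(v * u)) (-u) v := by
        exact (hasDerivAt_mul_const u).neg
      simpa [mul_comm] using h.exp
    have h := h0.const_mul ((-u) ^ i)
    rw [h.deriv]
    ring

lemma myNatLtOmega (j : ℕ) : (j : WithTop ℕ∞) < ∞ :=
  ENat.natCast_lt_of_coe_top_le_withTop le_rfl j

/-- `Ω(k,n)`: the (finite) set of `k`-tuples `(x_1,…,x_k)` of nonnegative
integers with `Σ_{j=1}^k j·x_j = n`. -/
def Omega (k n : ℕ) : Finset (Fin k → ℕ) :=
  (Fintype.piFinset fun _ : Fin k => Finset.range (n + 1)).filter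
    (fun x => ∑ j, (j.1 + 1) * x j = n)

/-- **Theorem 5 (representation part).** Distribution of the generalized
counting process with double time change `M(H^ψ(Y^f(t)))`. -/
theorem gcp_double_time_change_representation
    -- ψ a Bernšteĭn function with drift d, killing c and Lévy measure μm
    (c d : ℝ) (hc : 0 ≤ c) (hd : 0 ≤ d)
    (μm : Measure ℝ)
    (hμm : ∫⁻ y in Ioi (0:ℝ), ENNReal.ofReal (min y 1) ∂μm < ⊤)
    (ψ : ℝ → ℝ)
    (hψ : ∀ x > 0, ψ x = c + d * x + ∫ y in Ioi (0:ℝ), (1 - Real.exp (-(x * y))) ∂μm)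
    -- the density ℓ of the inverse subordinator Y^f
    (ℓ : ℝ → ℝ → ℝ)
    (hℓmeas : Measurable (Function.uncurry ℓ))
    (hℓnonneg : ∀ t u, 0 ≤ ℓ t u)
    (hℓprob : ∀ t ≥ (0:ℝ), ∫ u in Ioi (0:ℝ), ℓ t u = 1)
    -- parameters of the generalized counting process
    (k : ℕ) (hk : 1 ≤ k)
    (lam : Fin k → ℝ) (hlam : ∀ j, 0 < lam j)
    (Λ : ℝ) (hΛ : Λ = ∑ j, lam j)
    (n : ℕ) (t : ℝ) (ht : 0 ≤ t) (hψΛ : 0 < ψ Λ)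
    -- the marginals p̃_n^ψ of M(H^ψ)
    (ptil : ℝ → ℝ)
    (hptil : ∀ s, ptil s = ∑ x ∈ Omega k n,
        (∏ j, lam j ^ (x j) / (Nat.factorial (x j))) * (-1 : ℝ) ^ (∑ j, x j) *
          iteratedDeriv (∑ j, x j) (fun w => Real.exp (-(s * ψ w))) Λ) :
    ∫ s in Ioi (0:ℝ), ptil s * ℓ t s
      = ∑ x ∈ Omega k n,
          (∏ j, lam j ^ (x j) / (Nat.factorial (x j))) * (-1 : ℝ) ^ (∑ j, x j) *
            iteratedDeriv (∑ j, x j)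
              (fun w => ∫ u in Ioi (0:ℝ), Real.exp (-(ψ w * u)) * ℓ t u) Λ := by
  classical
  have hΛpos : 0 < Λ := by
    rw [hΛ]
    haveI : Nonempty (Fin k) := ⟨⟨0, hk⟩⟩
    exact Finset.sum_pos (fun j _ => hlam j) Finset.univ_nonempty
  have hψC : ContDiffOn ℝ ∞ ψ (Ioi 0) := by
    refine ContDiffOn.congr ?_ (fun x hx => hψ x hx)
    exact ((contDiff_const.add (contDiff_const.mul contDiff_id)).contDiffOn).add
      (myContDiffOnJ hμm)
  set ε : ℝ := ψ Λ / 2 with hεdef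
  have hεpos : 0 < ε := by positivity
  have hcont : ContinuousAt ψ Λ := hψC.continuousOn.continuousAt (isOpen_Ioi.mem_nhds hΛpos)
  obtain ⟨δ₀, hδ₀pos, hδ₀⟩ := Metric.continuousAt_iff.1 hcont ε hεpos
  set δ : ℝ := min (δ₀ / 2) (Λ / 2) with hδdef
  have hδpos : 0 < δ := lt_min (by linarith) (by linarith)
  have hδΛ : δ ≤ Λ / 2 := min_le_right _ _
  have hδδ₀ : δ ≤ δ₀ / 2 := min_le_left _ _
  set K : Set ℝ := Icc (Λ - δ) (Λ + δ) with hKdef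
  set I : Set ℝ := Ioo (Λ - δ) (Λ + δ) with hIdef
  have hIK : I ⊆ K := Ioo_subset_Icc_self
  have hKpos : K ⊆ Ioi 0 := by
    intro w hw
    have h1 : Λ - δ ≤ w := hw.1
    simp only [mem_Ioi]; linarith
  have hKψ : ∀ w ∈ K, ε ≤ ψ w := by
    intro w hw
    have hd : dist w Λ < δ₀ := by
      rw [Real.dist_eq, abs_lt]
      obtain ⟨h1, h2⟩ := hw
      constructor <;> linarith
    have h := hδ₀ hd
    rw [Real.dist_eq, abs_lt] at h
    have := h.1
    simp only [hεdef] at this ⊢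
    linarith
  have hΛI : Λ ∈ I := ⟨by linarith, by linarith⟩
  have hΛ0 : Λ ∈ Ioi (0:ℝ) := hΛpos
  have hℓt : Measurable (ℓ t) := hℓmeas.of_uncurry_left
  have hℓint : Integrable (ℓ t) (volume.restrict (Ioi 0)) := by
    by_contra h
    have h1 := hℓprob t ht
    rw [integral_undef h] at h1
    norm_num at h1
  have hgC : ∀ u : ℝ, ContDiffOn ℝ ∞ (fun w' => Real.exp (-(ψ w' * u))) (Ioi 0) := by
    intro u
    have houter : ContDiff ℝ ∞ (fun v : ℝ => Real.exp (-(v * u))) :=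
      Real.contDiff_exp.comp ((contDiff_id.mul contDiff_const).neg)
    exact houter.comp_contDiffOn hψC
  have hkey : ∀ (u : ℝ) (j : ℕ) (x : ℝ), x ∈ Ioi (0:ℝ) →
      HasDerivAt (iteratedDerivWithin j (fun w' => Real.exp (-(ψ w' * u))) (Ioi 0))
        (iteratedDerivWithin (j + 1) (fun w' => Real.exp (-(ψ w' * u))) (Ioi 0) x) x := by
    intro u j x hx
    have hd : DifferentiableAt ℝ
        (iteratedDerivWithin j (fun w' => Real.exp (-(ψ w' * u))) (Ioi 0)) x :=
      (((hgC u).differentiableOn_iteratedDerivWithin (myNatLtOmega j)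
        isOpen_Ioi.uniqueDiffOn) x hx).differentiableAt (isOpen_Ioi.mem_nhds hx)
    have h := hd.hasDerivAt
    rwa [← derivWithin_of_isOpen isOpen_Ioi hx,
      ← iteratedDerivWithin_succ] at h
  have hDbound : ∀ m : ℕ, ∃ C : ℝ, 0 ≤ C ∧ ∀ u : ℝ, 0 ≤ u → ∀ w ∈ K,
      |iteratedDerivWithin m (fun w' => Real.exp (-(ψ w' * u))) (Ioi 0) w| ≤ C := by
    intro m
    have hcontd : ∀ i : ℕ, ContinuousOn (iteratedDerivWithin i ψ (Ioi 0)) (Ioi 0) := fun i =>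
      hψC.continuousOn_iteratedDerivWithin (myNatLtOmega i).le isOpen_Ioi.uniqueDiffOn
    have hBc : ∀ i : ℕ, ∃ B : ℝ, ∀ w ∈ K, ‖iteratedDerivWithin i ψ (Ioi 0) w‖ ≤ B := fun i =>
      isCompact_Icc.exists_bound_of_continuousOn ((hcontd i).mono hKpos)
    choose B hB using hBc
    set D : ℝ := 1 + ∑ i ∈ Finset.range (m + 1), |B i| with hDdef
    have hsumnn : 0 ≤ ∑ i ∈ Finset.range (m + 1), |B i| :=
      Finset.sum_nonneg fun i _ => abs_nonneg _
    have hD1 : 1 ≤ D := by simp only [hDdef]; linarith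
    set C0 : ℝ := ∑ i ∈ Finset.range (m + 1), (i ! : ℝ) / ε ^ i with hC0def
    have hC0nn : 0 ≤ C0 := Finset.sum_nonneg fun i _ => by positivity
    have hD0 : 0 ≤ D := by linarith
    refine ⟨(m ! : ℝ) * C0 * D ^ m, by positivity, ?_⟩
    intro u hu w hwK
    have hw0 : w ∈ Ioi (0:ℝ) := hKpos hwK
    rw [← Real.norm_eq_abs, ← norm_iteratedFDerivWithin_eq_norm_iteratedDerivWithin]
    have hcomp : (fun w' => Real.exp (-(ψ w' * u)))
        = (fun v : ℝ => Real.exp (-(v * u))) ∘ ψ := rfl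
    rw [hcomp]
    refine norm_iteratedFDerivWithin_comp_le (𝕜 := ℝ) (N := (∞ : WithTop ℕ∞))
      (show ContDiff ℝ ∞ (fun v : ℝ => Real.exp (-(v * u))) from
        Real.contDiff_exp.comp ((contDiff_id.mul contDiff_const).neg)).contDiffOn
      hψC (myNatLtOmega m).le uniqueDiffOn_univ isOpen_Ioi.uniqueDiffOn
      (mapsTo_univ ψ _) hw0 (C := C0) (D := D) ?_ ?_
    · intro i hi
      rw [iteratedFDerivWithin_univ, norm_iteratedFDeriv_eq_norm_iteratedDeriv, myIDexp,
        Real.norm_eq_abs]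
      have hψw : ε ≤ ψ w := hKψ w hwK
      have h1 : |(-u) ^ i * Real.exp (-(ψ w * u))| = u ^ i * Real.exp (-(ψ w * u)) := by
        rw [abs_mul, abs_pow, abs_neg, abs_of_nonneg hu, abs_of_nonneg (Real.exp_pos _).le]
      rw [h1]
      calc u ^ i * Real.exp (-(ψ w * u)) ≤ u ^ i * Real.exp (-(ε * u)) :=
            mul_le_mul_of_nonneg_left (Real.exp_le_exp.2 (by nlinarith)) (pow_nonneg hu i)
      _ ≤ (i ! : ℝ) / ε ^ i := myPowExp hεpos hu i
      _ ≤ C0 := Finset.single_le_sum (f := fun i => (i ! : ℝ) / ε ^ i)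
            (fun j _ => by positivity) (Finset.mem_range_succ_iff.2 hi)
    · intro i hi1 him
      rw [norm_iteratedFDerivWithin_eq_norm_iteratedDerivWithin]
      have hle : |B i| ≤ ∑ j ∈ Finset.range (m + 1), |B j| :=
        Finset.single_le_sum (f := fun j => |B j|) (fun j _ => abs_nonneg _)
          (Finset.mem_range_succ_iff.2 him)
      calc ‖iteratedDerivWithin i ψ (Ioi 0) w‖ ≤ B i := hB i w hwK
      _ ≤ |B i| := le_abs_self _
      _ ≤ D := by simp only [hDdef]; linarith
      _ ≤ D ^ i := le_self_pow₀ hD1 (by omega)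
  have hmeas : ∀ m : ℕ, ∀ w ∈ Ioi (0:ℝ),
      Measurable (fun u : ℝ =>
        iteratedDerivWithin m (fun w' => Real.exp (-(ψ w' * u))) (Ioi 0) w) := by
    intro m
    induction m with
    | zero =>
      intro w hw
      simp only [iteratedDerivWithin_zero]
      exact (Real.continuous_exp.comp (continuous_const.mul continuous_id).neg).measurable
    | succ m IH =>
      intro w hw
      have hw0 : (0:ℝ) < w := hw
      have hseq : ∀ nn : ℕ, Measurable (fun u =>
          (iteratedDerivWithin m (fun w' => Real.exp (-(ψ w' * u))) (Ioi 0) (w + w / (nn + 2))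
            - iteratedDerivWithin m (fun w' => Real.exp (-(ψ w' * u))) (Ioi 0) w)
            / (w / (nn + 2))) := by
        intro nn
        have hmem : w + w / ((nn : ℝ) + 2) ∈ Ioi (0:ℝ) := by
          simp only [mem_Ioi]; positivity
        exact ((IH _ hmem).sub (IH w hw)).div_const _
      refine measurable_of_tendsto_metrizable' atTop hseq ?_
      rw [tendsto_pi_nhds]
      intro u
      have hda := hkey u m w hw
      have hslope := hasDerivAt_iff_tendsto_slope.1 hda
      have hutend : Tendsto (fun nn : ℕ => w + w / ((nn : ℝ) + 2)) atTop (𝓝[≠] w) := by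
        rw [tendsto_nhdsWithin_iff]
        constructor
        · have h0 : Tendsto (fun nn : ℕ => w / ((nn : ℝ) + 2)) atTop (𝓝 0) := by
            have := (tendsto_const_div_atTop_nhds_zero_nat w).comp (tendsto_add_atTop_nat 2)
            refine this.congr fun nn => ?_
            simp only [Function.comp_apply]
            push_cast
            ring
          simpa using tendsto_const_nhds.add h0
        · refine Eventually.of_forall fun nn => ?_
          simp only [mem_compl_iff, mem_singleton_iff]
          have hpos : (0:ℝ) < w / ((nn : ℝ) + 2) := by positivity
          exact ne_of_gt (by linarith)
      have hcompt := hslope.comp hutend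
      refine hcompt.congr fun nn => ?_
      simp only [Function.comp_apply]
      rw [slope_def_field, add_sub_cancel_left]
  have hΦ : ∀ m : ℕ, ∀ w ∈ I, HasDerivAt
      (fun w' => ∫ u in Ioi (0:ℝ),
        iteratedDerivWithin m (fun w'' => Real.exp (-(ψ w'' * u))) (Ioi 0) w' * ℓ t u)
      (∫ u in Ioi (0:ℝ),
        iteratedDerivWithin (m + 1) (fun w'' => Real.exp (-(ψ w'' * u))) (Ioi 0) w * ℓ t u)
      w := by
    intro m w hwI
    have hw0 : w ∈ Ioi (0:ℝ) := hKpos (hIK hwI)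
    obtain ⟨r, hrpos, hrsub⟩ := Metric.isOpen_iff.1 isOpen_Ioo w hwI
    obtain ⟨C1, hC1nn, hC1⟩ := hDbound (m + 1)
    obtain ⟨C2, hC2nn, hC2⟩ := hDbound m
    have key := hasDerivAt_integral_of_dominated_loc_of_deriv_le
        (μ := volume.restrict (Ioi 0))
        (F := fun w' u =>
          iteratedDerivWithin m (fun w'' => Real.exp (-(ψ w'' * u))) (Ioi 0) w' * ℓ t u)
        (F' := fun w' u =>
          iteratedDerivWithin (m + 1) (fun w'' => Real.exp (-(ψ w'' * u))) (Ioi 0) w' * ℓ t u)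
        (x₀ := w) (s := Metric.ball w r) (bound := fun u => C1 * ℓ t u) (Metric.ball_mem_nhds w hrpos)
        (by
          filter_upwards [isOpen_Ioi.mem_nhds hw0] with x hx
          exact ((hmeas m x hx).mul hℓt).aestronglyMeasurable)
        (by
          refine (hℓint.const_mul C2).mono'
            ((hmeas m w hw0).mul hℓt).aestronglyMeasurable ?_
          filter_upwards [ae_restrict_mem measurableSet_Ioi] with u hu
          rw [Real.norm_eq_abs, abs_mul, abs_of_nonneg (hℓnonneg t u)]
          exact mul_le_mul_of_nonneg_right (hC2 u (le_of_lt hu) w (hIK hwI)) (hℓnonneg t u))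
        (((hmeas (m + 1) w hw0).mul hℓt).aestronglyMeasurable)
        (by
          filter_upwards [ae_restrict_mem measurableSet_Ioi] with u hu
          intro x hx
          rw [Real.norm_eq_abs, abs_mul, abs_of_nonneg (hℓnonneg t u)]
          exact mul_le_mul_of_nonneg_right
            (hC1 u (le_of_lt hu) x (hIK (hrsub hx))) (hℓnonneg t u))
        (hℓint.const_mul C1)
        (Eventually.of_forall fun u x hx =>
          (hkey u m x (hKpos (hIK (hrsub hx)))).mul_const (ℓ t u))
    exact key.2
  have hΦiter : ∀ m : ℕ, ∀ w ∈ I,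
      iteratedDerivWithin m
        (fun w' => ∫ u in Ioi (0:ℝ), Real.exp (-(ψ w' * u)) * ℓ t u) I w
        = ∫ u in Ioi (0:ℝ),
            iteratedDerivWithin m (fun w'' => Real.exp (-(ψ w'' * u))) (Ioi 0) w * ℓ t u := by
    intro m
    induction m with
    | zero =>
      intro w hw
      simp only [iteratedDerivWithin_zero]
    | succ m IH =>
      intro w hw
      rw [iteratedDerivWithin_succ,
        derivWithin_of_isOpen isOpen_Ioo hw]
      have hEq : iteratedDerivWithin m
          (fun w' => ∫ u in Ioi (0:ℝ), Real.exp (-(ψ w' * u)) * ℓ t u) I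
          =ᶠ[𝓝 w] fun w' => ∫ u in Ioi (0:ℝ),
            iteratedDerivWithin m (fun w'' => Real.exp (-(ψ w'' * u))) (Ioi 0) w' * ℓ t u := by
        filter_upwards [isOpen_Ioo.mem_nhds hw] with x hx using IH x hx
      rw [hEq.deriv_eq]
      exact (hΦ m w hw).deriv
  have hF0 : ∀ m : ℕ,
      iteratedDeriv m (fun w => ∫ u in Ioi (0:ℝ), Real.exp (-(ψ w * u)) * ℓ t u) Λ
        = ∫ u in Ioi (0:ℝ),
            iteratedDerivWithin m (fun w' => Real.exp (-(ψ w' * u))) (Ioi 0) Λ * ℓ t u := by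
    intro m
    rw [← myIDWOpen isOpen_Ioo hΛI m]
    exact hΦiter m Λ hΛI
  have hterm : ∀ m : ℕ, Integrable
      (fun s => iteratedDerivWithin m (fun w' => Real.exp (-(ψ w' * s))) (Ioi 0) Λ * ℓ t s)
      (volume.restrict (Ioi 0)) := by
    intro m
    obtain ⟨C, hCnn, hC⟩ := hDbound m
    refine (hℓint.const_mul C).mono' ((hmeas m Λ hΛ0).mul hℓt).aestronglyMeasurable ?_
    filter_upwards [ae_restrict_mem measurableSet_Ioi] with s hs
    rw [Real.norm_eq_abs, abs_mul, abs_of_nonneg (hℓnonneg t s)]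
    exact mul_le_mul_of_nonneg_right (hC s (le_of_lt hs) Λ (hIK hΛI)) (hℓnonneg t s)
  have hswap : ∀ (s : ℝ) (m : ℕ),
      iteratedDeriv m (fun w => Real.exp (-(s * ψ w))) Λ
        = iteratedDerivWithin m (fun w' => Real.exp (-(ψ w' * s))) (Ioi 0) Λ := by
    intro s m
    rw [← myIDWOpen isOpen_Ioi hΛ0 m]
    congr 1
    funext w
    rw [mul_comm]
  calc ∫ s in Ioi (0:ℝ), ptil s * ℓ t s
      = ∫ s in Ioi (0:ℝ), ∑ x ∈ Omega k n,
          (∏ j, lam j ^ (x j) / (Nat.factorial (x j))) * (-1 : ℝ) ^ (∑ j, x j) *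
            (iteratedDerivWithin (∑ j, x j)
              (fun w' => Real.exp (-(ψ w' * s))) (Ioi 0) Λ * ℓ t s) := by
        refine setIntegral_congr_fun measurableSet_Ioi fun s hs => ?_
        rw [hptil s, Finset.sum_mul]
        refine Finset.sum_congr rfl fun x hx => ?_
        rw [hswap s (∑ j, x j), mul_assoc]
    _ = ∑ x ∈ Omega k n,
          (∏ j, lam j ^ (x j) / (Nat.factorial (x j))) * (-1 : ℝ) ^ (∑ j, x j) *
            ∫ s in Ioi (0:ℝ), iteratedDerivWithin (∑ j, x j)
              (fun w' => Real.exp (-(ψ w' * s))) (Ioi 0) Λ * ℓ t s := by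
        rw [integral_finset_sum _ (fun x _ => (hterm (∑ j, x j)).const_mul _)]
        exact Finset.sum_congr rfl fun x hx => integral_const_mul _ _
    _ = ∑ x ∈ Omega k n,
          (∏ j, lam j ^ (x j) / (Nat.factorial (x j))) * (-1 : ℝ) ^ (∑ j, x j) *
            iteratedDeriv (∑ j, x j)
              (fun w => ∫ u in Ioi (0:ℝ), Real.exp (-(ψ w * u)) * ℓ t u) Λ := by
        refine Finset.sum_congr rfl fun x hx => ?_
        rw [hF0 (∑ j, x j)]
end

section
/- Closed-form integral–series identity for the distribution of the generalized counting process time-changed by a compound Poisson–Gamma subordinator (Example 2 computation). Let k ≥ 1, n ≥ 1 an integer, λ_1,…,λ_k > 0, Λ = Σ_{j=1}^k λ_j, and λ̄, α, β, t > 0. Then both sides of the following identity are finite and equal: ∫_0^∞ ( Σ_{x∈Ω(k,n)} Π_{j=1}^k (λ_j s)^{x_j}/x_j! ) · e^{−(Λ+β)s} · s^{−1} · ( Σ_{l=1}^∞ (λ̄ t β^α)^l s^{α l} / (l!·Γ(α l)) ) ds = Σ_{x∈Ω(k,n)} ( Π_{j=1}^k λ_j^{x_j}/x_j! ) · (Λ+β)^{−z(x)}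 · Σ_{l=1}^∞ ( λ̄ t β^α/(Λ+β)^α )^l · Γ(z(x)+α l)/(l!·Γ(α l)), where Γ is the Gamma function. (The inner series on the right is the generalized Wright function ₁Ψ₁((z(x),α),(0,α); λ̄ t β^α/(Λ+β)^α) without the l = 0 term.) -/
open MeasureTheory Set Filter

/-- Ratio test helper: positive sequence eventually halving is summable. -/
lemma aux_ratio_summable {u : ℕ → ℝ} (hpos : ∀ l, 0 ≤ u l)
    (h : ∀ᶠ l in atTop, u (l + 1) ≤ (1/2 : ℝ) * u l) : Summable u := by
  refine summable_of_ratio_norm_eventually_le (r := 1/2) (by norm_num) ?_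
  filter_upwards [h] with l hl
  rw [Real.norm_of_nonneg (hpos _), Real.norm_of_nonneg (hpos _)]
  exact hl

/-- `Γ(m + a) = Γ(a) * ∏_{i<m} (a + i)` for `a > 0`. -/
lemma aux_gamma_add_nat (m : ℕ) {a : ℝ} (ha : 0 < a) :
    Real.Gamma ((m : ℝ) + a) = Real.Gamma a * ∏ i ∈ Finset.range m, (a + i) := by
  induction m with
  | zero => simp
  | succ m ih =>
      have h1 : ((m + 1 : ℕ) : ℝ) + a = ((m : ℝ) + a) + 1 := by push_cast; ring
      have h2 : (0:ℝ) < (m : ℝ) + a := by positivity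
      rw [h1, Real.Gamma_add_one h2.ne', ih, Finset.prod_range_succ]
      push_cast
      ring

/-- Summability of the Wright-type series (with the Gamma ratio). -/
lemma aux_summable_main {α ρ : ℝ} (hα : 0 < α) (hρ : 0 < ρ) (m : ℕ) :
    Summable fun l : ℕ => ρ ^ (l + 1) * Real.Gamma ((m : ℝ) + α * ((l : ℝ) + 1)) /
      ((Nat.factorial (l + 1)) * Real.Gamma (α * ((l : ℝ) + 1))) := by
  have hg : ∀ l : ℕ, (0:ℝ) < Real.Gamma (α * ((l : ℝ) + 1)) := fun l =>
    Real.Gamma_pos_of_pos (by positivity)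
  have key : ∀ l : ℕ, ρ ^ (l + 1) * Real.Gamma ((m : ℝ) + α * ((l : ℝ) + 1)) /
      ((Nat.factorial (l + 1)) * Real.Gamma (α * ((l : ℝ) + 1)))
      = ρ ^ (l + 1) * (∏ i ∈ Finset.range m, (α * ((l : ℝ) + 1) + i)) /
        (Nat.factorial (l + 1)) := by
    intro l
    rw [aux_gamma_add_nat m (show (0:ℝ) < α * ((l:ℝ)+1) by positivity)]
    have hf : (0:ℝ) < (Nat.factorial (l+1) : ℝ) := by positivity
    field_simp
  rw [show (fun l : ℕ => ρ ^ (l + 1) * Real.Gamma ((m : ℝ) + α * ((l : ℝ) + 1)) /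
      ((Nat.factorial (l + 1)) * Real.Gamma (α * ((l : ℝ) + 1)))) = fun l : ℕ =>
      ρ ^ (l + 1) * (∏ i ∈ Finset.range m, (α * ((l : ℝ) + 1) + i)) /
        (Nat.factorial (l + 1)) from funext key]
  -- ratio test
  set u : ℕ → ℝ := fun l => ρ ^ (l + 1) * (∏ i ∈ Finset.range m, (α * ((l : ℝ) + 1) + i)) /
        (Nat.factorial (l + 1)) with hu
  have hupos : ∀ l, 0 ≤ u l := by
    intro l
    have : (0:ℝ) ≤ ∏ i ∈ Finset.range m, (α * ((l : ℝ) + 1) + i) :=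
      Finset.prod_nonneg fun i _ => by positivity
    positivity
  refine aux_ratio_summable hupos ?_
  filter_upwards [eventually_ge_atTop (Nat.ceil (ρ * 2 ^ (m+1)))] with l hl
  have hprod : (∏ i ∈ Finset.range m, (α * ((l : ℝ) + 1 + 1) + i))
      ≤ 2 ^ m * ∏ i ∈ Finset.range m, (α * ((l : ℝ) + 1) + i) := by
    rw [show (2:ℝ) ^ m = ∏ _i ∈ Finset.range m, (2:ℝ) by simp, ← Finset.prod_mul_distrib]
    refine Finset.prod_le_prod (fun i _ => by positivity) (fun i _ => ?_)
    have hi : (0:ℝ) ≤ (i:ℝ) := Nat.cast_nonneg i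
    nlinarith [hα.le, mul_nonneg hα.le (Nat.cast_nonneg l)]
  have hfact : (Nat.factorial (l + 1 + 1) : ℝ) = (l + 2) * Nat.factorial (l + 1) := by
    rw [Nat.factorial_succ]; push_cast; ring
  have hratio : ρ * 2 ^ m / ((l:ℝ) + 2) ≤ 1/2 := by
    rw [div_le_iff₀ (by positivity)]
    have h1 : ρ * 2 ^ (m+1) ≤ (l:ℝ) := le_trans (Nat.le_ceil _) (by exact_mod_cast hl)
    rw [pow_succ] at h1
    nlinarith
  have hul : 0 ≤ ρ ^ (l + 1) * (∏ i ∈ Finset.range m, (α * ((l : ℝ) + 1) + i)) := by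
    have : (0:ℝ) ≤ ∏ i ∈ Finset.range m, (α * ((l : ℝ) + 1) + i) :=
      Finset.prod_nonneg fun i _ => by positivity
    positivity
  have hP : (0:ℝ) ≤ ∏ i ∈ Finset.range m, (α * ((l : ℝ) + 1) + i) :=
    Finset.prod_nonneg fun i _ => by positivity
  have e1 : u (l + 1) = ρ ^ (l + 2) *
      (∏ i ∈ Finset.range m, (α * ((l : ℝ) + 1 + 1) + i)) /
      (((l:ℝ) + 2) * (Nat.factorial (l + 1))) := by
    simp only [hu]
    push_cast [hfact]
    ring_nf
  have e2 : (ρ * 2 ^ m / ((l:ℝ) + 2)) * u l = ρ ^ (l + 2) *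
      (2 ^ m * ∏ i ∈ Finset.range m, (α * ((l : ℝ) + 1) + i)) /
      (((l:ℝ) + 2) * (Nat.factorial (l + 1))) := by
    simp only [hu]
    have hf : ((Nat.factorial (l+1) : ℝ)) ≠ 0 := by positivity
    field_simp
    ring
  have step : u (l + 1) ≤ (ρ * 2 ^ m / ((l:ℝ) + 2)) * u l := by
    rw [e1, e2]
    gcongr
  calc u (l+1) ≤ (ρ * 2 ^ m / ((l:ℝ) + 2)) * u l := step
    _ ≤ (1/2) * u l := by
        have := hupos l
        nlinarith [hratio]

/-- Summability of the series without the Gamma ratio, using monotonicity of Γ on `[2,∞)`. -/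
lemma aux_summable_simple {α q : ℝ} (hα : 0 < α) (hq : 0 < q) :
    Summable fun l : ℕ =>
      q ^ (l + 1) / ((Nat.factorial (l + 1)) * Real.Gamma (α * ((l : ℝ) + 1))) := by
  have hg : ∀ l : ℕ, (0:ℝ) < Real.Gamma (α * ((l:ℝ)+1)) := fun l =>
    Real.Gamma_pos_of_pos (by positivity)
  set v : ℕ → ℝ := fun l =>
    q ^ (l + 1) / ((Nat.factorial (l + 1)) * Real.Gamma (α * ((l : ℝ) + 1))) with hv
  have hvpos : ∀ l, 0 ≤ v l := fun l => by
    have h1 := hg l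
    have h2 : (0:ℝ) < (Nat.factorial (l+1) : ℝ) := by positivity
    positivity
  refine aux_ratio_summable hvpos ?_
  filter_upwards [eventually_ge_atTop (max (Nat.ceil (2*q)) (Nat.ceil (2/α)))] with l hl
  have hl1 : (2*q : ℝ) ≤ l :=
    le_trans (Nat.le_ceil _) (by exact_mod_cast le_trans (le_max_left _ _) hl)
  have hl2 : (2/α : ℝ) ≤ l :=
    le_trans (Nat.le_ceil _) (by exact_mod_cast le_trans (le_max_right _ _) hl)
  have h2 : (2:ℝ) ≤ α * ((l:ℝ)+1) := by
    rw [div_le_iff₀ hα] at hl2; nlinarith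
  have hmono : Real.Gamma (α*((l:ℝ)+1)) ≤ Real.Gamma (α*((l:ℝ)+1+1)) :=
    Real.Gamma_strictMonoOn_Ici.monotoneOn h2 (le_trans h2 (by nlinarith)) (by nlinarith)
  have hfact : ((l + 1 + 1).factorial : ℝ) = ((l:ℝ) + 2) * ((l + 1).factorial : ℝ) := by
    rw [Nat.factorial_succ]; push_cast; ring
  have e1 : v (l + 1) = q * q ^ (l + 1) /
      ((((l:ℝ) + 2) * ((l + 1).factorial : ℝ)) * Real.Gamma (α * ((l:ℝ) + 1 + 1))) := by
    simp only [hv]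
    push_cast [hfact]
    ring_nf
  have e2 : (q / ((l:ℝ) + 2)) * v l = q * q ^ (l + 1) /
      ((((l:ℝ) + 2) * ((l + 1).factorial : ℝ)) * Real.Gamma (α * ((l:ℝ) + 1))) := by
    simp only [hv]
    have h1 := hg l
    have hf : ((Nat.factorial (l+1) : ℝ)) ≠ 0 := by positivity
    field_simp
  have step : v (l + 1) ≤ (q / ((l:ℝ) + 2)) * v l := by
    rw [e1, e2]
    gcongr
  refine step.trans ?_
  have := hvpos l
  have hq2 : q / ((l:ℝ) + 2) ≤ 1/2 := by
    rw [div_le_iff₀ (by positivity)]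
    nlinarith
  nlinarith

/-- If nonnegative integrable functions have summable integrals, their pointwise
`tsum` is integrable. -/
lemma aux_integrable_tsum {μ : Measure ℝ} {F : ℕ → ℝ → ℝ}
    (hF_int : ∀ i, Integrable (F i) μ)
    (hF_nonneg : ∀ i, ∀ᵐ a ∂μ, 0 ≤ F i a)
    (hF_sum : Summable fun i => ∫ a, F i a ∂μ) :
    Integrable (fun a => ∑' i, F i a) μ := by
  have hnorm : ∀ i, (fun a => ‖F i a‖) =ᵐ[μ] F i := fun i =>
    (hF_nonneg i).mono fun a ha => by simpa using Real.norm_of_nonneg ha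
  have hInt : ∀ i, ∫ a, ‖F i a‖ ∂μ = ∫ a, F i a ∂μ := fun i => integral_congr_ae (hnorm i)
  have hsum' : Summable fun i => ∫ a, ‖F i a‖ ∂μ := by
    simp only [hInt]; exact hF_sum
  have hlt : ∀ i, ∫⁻ a, (‖F i a‖₊ : ENNReal) ∂μ = ENNReal.ofReal (∫ a, ‖F i a‖ ∂μ) := by
    intro i
    rw [lintegral_coe_eq_integral (fun a => ‖F i a‖₊) (by simpa using (hF_int i).norm)]
    simp only [coe_nnnorm]
  have hkey : ∑' i, ∫⁻ a, (‖F i a‖₊ : ENNReal) ∂μ ≠ ⊤ := by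
    simp only [hlt]
    rw [← ENNReal.ofReal_tsum_of_nonneg (fun i => integral_nonneg fun a => norm_nonneg _) hsum']
    exact ENNReal.ofReal_ne_top
  have hmeas : AEStronglyMeasurable (fun a => ∑' i, F i a) μ := by
    have h1 : ∀ i, AEMeasurable (fun a => ENNReal.ofReal (F i a)) μ := fun i =>
      ENNReal.measurable_ofReal.comp_aemeasurable (hF_int i).1.aemeasurable
    have h2 : AEMeasurable (fun a => (∑' i, ENNReal.ofReal (F i a)).toReal) μ :=
      (AEMeasurable.ennreal_tsum h1).ennreal_toReal
    refine h2.aestronglyMeasurable.congr ?_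
    filter_upwards [ae_all_iff.mpr hF_nonneg] with a ha
    by_cases hs : Summable fun i => F i a
    · rw [← ENNReal.ofReal_tsum_of_nonneg ha hs, ENNReal.toReal_ofReal (tsum_nonneg fun i => ha i)]
    · have htop : ∑' i, ENNReal.ofReal (F i a) = ⊤ := by
        by_contra h
        refine hs ?_
        have := ENNReal.summable_toReal h
        exact this.congr fun i => by simp [Function.comp, ENNReal.toReal_ofReal (ha i)]
      rw [htop, ENNReal.toReal_top, tsum_eq_zero_of_not_summable hs]
  refine ⟨hmeas, ?_⟩
  have bound : ∫⁻ a, (‖∑' i, F i a‖₊ : ENNReal) ∂μ ≤ ∫⁻ a, ∑' i, (‖F i a‖₊ : ENNReal) ∂μ := by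
    refine lintegral_mono fun a => ?_
    by_cases hs : Summable fun i => F i a
    · have hns : Summable fun i => ‖F i a‖₊ := by
        rw [← NNReal.summable_coe]
        simpa [coe_nnnorm] using summable_norm_iff.mpr hs
      calc (‖∑' i, F i a‖₊ : ENNReal) ≤ ((∑' i, ‖F i a‖₊ : NNReal) : ENNReal) :=
            ENNReal.coe_le_coe.mpr (nnnorm_tsum_le hns)
        _ = ∑' i, (‖F i a‖₊ : ENNReal) := ENNReal.coe_tsum hns
    · rw [tsum_eq_zero_of_not_summable hs]
      simp
  refine lt_of_le_of_lt bound ?_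
  rw [lintegral_tsum fun i => (hF_int i).1.aemeasurable.nnnorm.coe_nnreal_ennreal]
  exact lt_top_iff_ne_top.mpr hkey

lemma aux_int {e B : ℝ} (he : 0 < e) (hB : 0 < B) :
    IntegrableOn (fun s : ℝ => s ^ (e - 1) * Real.exp (-(B * s))) (Ioi 0) := by
  have h := integrableOn_rpow_mul_exp_neg_mul_rpow (p := 1) (s := e - 1) (b := B)
    (by linarith) zero_lt_one hB
  refine h.congr_fun (fun x hx => ?_) measurableSet_Ioi
  beta_reduce
  rw [Real.rpow_one, neg_mul]

/-- Per-`x` package: integrability of the `l`-series and the value of its integral. -/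
lemma aux_per_x {B r α : ℝ} (hB : 0 < B) (hr : 0 < r) (hα : 0 < α)
    {C : ℝ} (hC : 0 ≤ C) (m : ℕ) :
    IntegrableOn (fun s => ∑' l : ℕ, C *
      (r ^ (l+1) / ((Nat.factorial (l+1)) * Real.Gamma (α * ((l:ℝ)+1)))) *
      (s ^ (((m:ℝ) + α * ((l:ℝ)+1)) - 1) * Real.exp (-(B * s)))) (Ioi 0) ∧
    ∫ s in Ioi (0:ℝ), (∑' l : ℕ, C *
      (r ^ (l+1) / ((Nat.factorial (l+1)) * Real.Gamma (α * ((l:ℝ)+1)))) *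
      (s ^ (((m:ℝ) + α * ((l:ℝ)+1)) - 1) * Real.exp (-(B * s))))
      = C / B ^ m * ∑' l : ℕ, (r / B ^ α) ^ (l+1) *
          Real.Gamma ((m:ℝ) + α * ((l:ℝ)+1)) /
          ((Nat.factorial (l+1)) * Real.Gamma (α * ((l:ℝ)+1))) := by
  set g : ℕ → ℝ → ℝ := fun l s => C *
      (r ^ (l+1) / ((Nat.factorial (l+1)) * Real.Gamma (α * ((l:ℝ)+1)))) *
      (s ^ (((m:ℝ) + α * ((l:ℝ)+1)) - 1) * Real.exp (-(B * s))) with hg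
  have hgΓ : ∀ l : ℕ, (0:ℝ) < Real.Gamma (α * ((l:ℝ)+1)) := fun l =>
    Real.Gamma_pos_of_pos (by positivity)
  have he_pos : ∀ l : ℕ, (0:ℝ) < (m:ℝ) + α * ((l:ℝ)+1) := fun l => by positivity
  have hg_int : ∀ l, IntegrableOn (g l) (Ioi 0) := fun l =>
    (aux_int (he_pos l) hB).const_mul _
  have hBα : (0:ℝ) < B ^ α := Real.rpow_pos_of_pos hB α
  have hg_val : ∀ l : ℕ, ∫ s in Ioi (0:ℝ), g l s =
      C / B ^ m * ((r / B ^ α) ^ (l+1) * Real.Gamma ((m:ℝ) + α * ((l:ℝ)+1)) /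
        ((Nat.factorial (l+1)) * Real.Gamma (α * ((l:ℝ)+1)))) := by
    intro l
    rw [hg]
    simp only []
    rw [MeasureTheory.integral_const_mul,
      Real.integral_rpow_mul_exp_neg_mul_Ioi (he_pos l) hB]
    have h1 : ((1:ℝ)/B) ^ ((m:ℝ) + α * ((l:ℝ)+1)) =
        ((B ^ m) * (B ^ α) ^ (l+1) : ℝ)⁻¹ := by
      rw [show (m:ℝ) + α * ((l:ℝ)+1) = ((m:ℕ):ℝ) + α * (((l+1:ℕ)):ℝ) by push_cast; ring]
      rw [Real.rpow_add (by positivity), Real.rpow_natCast,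
        Real.rpow_mul (by positivity : (0:ℝ) ≤ 1/B), Real.rpow_natCast]
      rw [Real.div_rpow zero_le_one hB.le, Real.one_rpow]
      rw [div_pow, div_pow, one_pow, one_pow]
      rw [mul_inv, one_div, one_div]
    rw [h1, div_pow]
    have hf : ((Nat.factorial (l+1) : ℝ)) ≠ 0 := by positivity
    have h2 := (hgΓ l).ne'
    have h3 : ((B:ℝ) ^ m) ≠ 0 := by positivity
    have h4 : ((B ^ α) ^ (l+1) : ℝ) ≠ 0 := by positivity
    field_simp
  have hg_nonneg : ∀ l, ∀ᵐ s ∂(volume.restrict (Ioi (0:ℝ))), 0 ≤ g l s := by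
    intro l
    filter_upwards [ae_restrict_mem measurableSet_Ioi] with s hs
    have hs' : (0:ℝ) < s := hs
    have := hgΓ l
    rw [hg]
    have hf : (0:ℝ) < (Nat.factorial (l+1) : ℝ) := by positivity
    positivity
  have hV_sum : Summable fun l => ∫ s in Ioi (0:ℝ), g l s := by
    simp only [hg_val]
    exact ((aux_summable_main hα (div_pos hr hBα) m).mul_left _)
  have hnorm_sum : Summable fun l => ∫ s in Ioi (0:ℝ), ‖g l s‖ := by
    have : ∀ l, ∫ s in Ioi (0:ℝ), ‖g l s‖ = ∫ s in Ioi (0:ℝ), g l s := fun l =>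
      integral_congr_ae ((hg_nonneg l).mono fun s hs => by simpa using Real.norm_of_nonneg hs)
    simp only [this]
    exact hV_sum
  refine ⟨aux_integrable_tsum hg_int hg_nonneg hV_sum, ?_⟩
  rw [← integral_tsum_of_summable_integral_norm hg_int hnorm_sum]
  simp only [hg_val]
  rw [tsum_mul_left]

/-- **Example 2 (closed-form identity).** Integral–series identity for the
distribution of the generalized counting process time-changed by a compound
Poisson–Gamma subordinator; the inner series on the right is the generalized
Wright function `₁Ψ₁((z(x),α),(0,α); λ̄tβ^α/(Λ+β)^α)` without the `l = 0`
term. -/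
theorem gcp_poisson_gamma_integral_series_identity
    (k n : ℕ) (hk : 1 ≤ k) (hn : 1 ≤ n)
    (lam : Fin k → ℝ) (hlam : ∀ j, 0 < lam j)
    (Λ : ℝ) (hΛ : Λ = ∑ j, lam j)
    (lamb α β t : ℝ) (hlamb : 0 < lamb) (hα : 0 < α) (hβ : 0 < β) (ht : 0 < t)
    (A : ℝ → ℝ)
    (hA : ∀ s : ℝ, A s
      = (∑ x ∈ Omega k n, ∏ j, (lam j * s) ^ (x j) / (Nat.factorial (x j)))
        * Real.exp (-((Λ + β) * s)) * s⁻¹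
        * ∑' l : ℕ, (lamb * t * β ^ α) ^ (l + 1) * s ^ (α * ((l : ℝ) + 1)) /
            ((Nat.factorial (l + 1)) * Real.Gamma (α * ((l : ℝ) + 1)))) :
    (∀ s > (0:ℝ), Summable fun l : ℕ =>
        (lamb * t * β ^ α) ^ (l + 1) * s ^ (α * ((l : ℝ) + 1)) /
          ((Nat.factorial (l + 1)) * Real.Gamma (α * ((l : ℝ) + 1))))
    ∧ IntegrableOn A (Ioi 0)
    ∧ (∀ x ∈ Omega k n, Summable fun l : ℕ =>
        (lamb * t * β ^ α / (Λ + β) ^ α) ^ (l + 1) *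
          Real.Gamma (((∑ j, x j : ℕ) : ℝ) + α * ((l : ℝ) + 1)) /
          ((Nat.factorial (l + 1)) * Real.Gamma (α * ((l : ℝ) + 1))))
    ∧ ∫ s in Ioi (0:ℝ), A s
        = ∑ x ∈ Omega k n,
            (∏ j, lam j ^ (x j) / (Nat.factorial (x j))) / (Λ + β) ^ (∑ j, x j) *
              ∑' l : ℕ, (lamb * t * β ^ α / (Λ + β) ^ α) ^ (l + 1) *
                Real.Gamma (((∑ j, x j : ℕ) : ℝ) + α * ((l : ℝ) + 1)) /
                ((Nat.factorial (l + 1)) * Real.Gamma (α * ((l : ℝ) + 1))) := by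
  have hΛ0 : (0:ℝ) ≤ Λ := hΛ ▸ Finset.sum_nonneg fun j _ => (hlam j).le
  have hB : (0:ℝ) < Λ + β := by linarith
  have hβα : (0:ℝ) < β ^ α := Real.rpow_pos_of_pos hβ α
  have hr : (0:ℝ) < lamb * t * β ^ α := by positivity
  have hBα : (0:ℝ) < (Λ + β) ^ α := Real.rpow_pos_of_pos hB α
  have hρ : (0:ℝ) < lamb * t * β ^ α / (Λ + β) ^ α := by positivity
  -- part (i)
  have part1 : ∀ s > (0:ℝ), Summable fun l : ℕ =>
      (lamb * t * β ^ α) ^ (l + 1) * s ^ (α * ((l : ℝ) + 1)) /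
        ((Nat.factorial (l + 1)) * Real.Gamma (α * ((l : ℝ) + 1))) := by
    intro s hs
    have h := aux_summable_simple (q := (lamb * t * β ^ α) * s ^ α) hα (by positivity)
    refine h.congr fun l => ?_
    rw [mul_pow]
    congr 1
    congr 1
    rw [← Real.rpow_natCast (s ^ α) (l+1), ← Real.rpow_mul hs.le]
    congr 1
    push_cast
    ring
  -- per-x package
  have key := fun (x : Fin k → ℕ) =>
    aux_per_x (r := lamb * t * β ^ α) hB hr hα
      (C := ∏ j, lam j ^ (x j) / (Nat.factorial (x j)))
      (Finset.prod_nonneg fun j _ => by have := (hlam j).le; positivity) (∑ j, x j)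
  -- pointwise identity on Ioi 0
  have hpt : ∀ s ∈ Ioi (0:ℝ), A s = ∑ x ∈ Omega k n, ∑' l : ℕ,
      (∏ j, lam j ^ (x j) / (Nat.factorial (x j) : ℝ)) *
      ((lamb * t * β ^ α) ^ (l+1) /
        ((Nat.factorial (l+1)) * Real.Gamma (α * ((l:ℝ)+1)))) *
      (s ^ ((((∑ j, x j : ℕ):ℝ) + α * ((l:ℝ)+1)) - 1) * Real.exp (-((Λ + β) * s))) := by
    intro s hs
    have hs' : (0:ℝ) < s := hs
    rw [hA s, Finset.sum_mul, Finset.sum_mul, Finset.sum_mul]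
    refine Finset.sum_congr rfl fun x _ => ?_
    have hprod : (∏ j, (lam j * s) ^ (x j) / (Nat.factorial (x j) : ℝ))
        = (∏ j, lam j ^ (x j) / (Nat.factorial (x j) : ℝ)) * s ^ (∑ j, x j) := by
      rw [← Finset.prod_pow_eq_pow_sum, ← Finset.prod_mul_distrib]
      refine Finset.prod_congr rfl fun j _ => ?_
      rw [mul_pow]; ring
    rw [hprod, ← tsum_mul_left]
    refine tsum_congr fun l => ?_
    have hse : s ^ ((((∑ j, x j : ℕ):ℝ) + α * ((l:ℝ)+1)) - 1)
        = s ^ (∑ j, x j) * s ^ (α * ((l:ℝ)+1)) * s⁻¹ := by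
      rw [show (((∑ j, x j : ℕ):ℝ) + α * ((l:ℝ)+1)) - 1
          = (((∑ j, x j : ℕ):ℝ) + α * ((l:ℝ)+1)) + (-1) by ring]
      rw [Real.rpow_add hs', Real.rpow_add hs', Real.rpow_natCast, Real.rpow_neg_one]
    rw [hse]
    ring
  have hae : A =ᵐ[volume.restrict (Ioi (0:ℝ))] fun s => ∑ x ∈ Omega k n, ∑' l : ℕ,
      (∏ j, lam j ^ (x j) / (Nat.factorial (x j) : ℝ)) *
      ((lamb * t * β ^ α) ^ (l+1) /
        ((Nat.factorial (l+1)) * Real.Gamma (α * ((l:ℝ)+1)))) *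
      (s ^ ((((∑ j, x j : ℕ):ℝ) + α * ((l:ℝ)+1)) - 1) * Real.exp (-((Λ + β) * s))) := by
    filter_upwards [ae_restrict_mem measurableSet_Ioi] with s hs using hpt s hs
  refine ⟨part1, ?_, fun x _ => aux_summable_main hα hρ (∑ j, x j), ?_⟩
  · exact (integrable_finset_sum _ fun x _ => (key x).1).congr hae.symm
  · rw [integral_congr_ae hae, integral_finset_sum _ fun x _ => (key x).1]
    exact Finset.sum_congr rfl fun x _ => (key x).2
end
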